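/- arXiv:1302.5811 — 4 statements merged into one kernel-verified Lean document; each statement's English description precedes it below -/
import Mathlib

section
/- Two finite decreasing filtrations F and G on an object A of an abelian category are n-opposite (i.e. Gr_F^p Gr_G^q (A) = 0 for p+q ≠ n) if and only if for all p, q with p + q = n + 1 one has F^p(A) ⊕ G^q(A) ≅ A (the natural map F^p(A) × G^q(A) → A is an isomorphism). -/
/-!
The argument is lattice-theoretic; the modular law is needed only for the converse.
If `F` and `G` are `n`-opposite, the opposite condition pushes `F p ⊓ G q` into its two
neighbours `F (p+1) ⊓ G q` and `F p ⊓ G (q+1)`. Iterating this until one filtration has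
vanished gives `F p ⊓ G q = ⊥` for `p + q > n`; iterating it from `F a ⊓ G b = ⊤` until
`p' ≥ p ∨ q' ≥ q` gives `F p ⊔ G q = ⊤` for `p + q ≤ n + 1`, since the walk never meets the
line `p' + q' = n`. Conversely, for `p + q < n` the complement `G (n-p)` of `F (p+1)` lies
in `G (q+1)`, and the modular law splits `F p ⊓ G q` along `F (p+1) ⊔ G (q+1) = ⊤`.
-/

/-- `F p ⊓ G q` modulo `F (p+1) ⊓ G q ⊔ F p ⊓ G (q+1)` is `Gr_F^p Gr_G^q`. -/
def IsOpposite {α : Type*} [Lattice α] (F G : ℤ → α) (n : ℤ) : Prop :=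
  ∀ p q : ℤ, p + q ≠ n → F p ⊓ G q ≤ F (p + 1) ⊓ G q ⊔ F p ⊓ G (q + 1)

section Lattice

variable {α : Type*} [Lattice α]

theorem le_of_le_sup_succ {x : ℤ → ℤ → α} {s : α} {a b m : ℤ}
    (hout : ∀ p q, a ≤ p ∨ b ≤ q → x p q ≤ s)
    (hin : ∀ p q, p < a → q < b → m ≤ p + q → x p q ≤ x (p + 1) q ⊔ x p (q + 1))
    (p q : ℤ) (hpq : m ≤ p + q) : x p q ≤ s := by
  suffices h : ∀ k : ℕ, ∀ p q, m ≤ p + q → a + b ≤ p + q + k → x p q ≤ s from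
    h (a + b - (p + q)).toNat p q hpq (by omega)
  intro k
  induction k with
  | zero => exact fun p q _ h => hout p q (by omega)
  | succ k ih =>
    intro p q hm hk
    by_cases hbox : a ≤ p ∨ b ≤ q
    · exact hout p q hbox
    · exact (hin p q (by omega) (by omega) hm).trans
        (sup_le (ih _ _ (by omega) (by omega)) (ih _ _ (by omega) (by omega)))

variable {F G : ℤ → α} {n : ℤ}

theorem IsOpposite.inf_eq_bot [OrderBot α] (h : IsOpposite F G n) (hF : Antitone F)
    (hG : Antitone G) {a b : ℤ} (ha : F a = ⊥) (hb : G b = ⊥) {p q : ℤ} (hpq : n < p + q) :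
    F p ⊓ G q = ⊥ := by
  refine le_bot_iff.1 (le_of_le_sup_succ (x := fun p q => F p ⊓ G q) (a := a) (b := b)
    ?_ (fun p q _ _ hm => h p q (by omega)) p q (Int.add_one_le_of_lt hpq))
  rintro p q (hp | hq)
  · exact inf_le_left.trans (ha ▸ hF hp)
  · exact inf_le_right.trans (hb ▸ hG hq)

theorem IsOpposite.sup_eq_top [OrderTop α] (h : IsOpposite F G n) (hF : Antitone F)
    (hG : Antitone G) {a b : ℤ} (ha : F a = ⊤) (hb : G b = ⊤) {p q : ℤ} (hpq : p + q ≤ n + 1) :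
    F p ⊔ G q = ⊤ := by
  have hle := le_of_le_sup_succ (x := fun p q => F p ⊓ G q) (s := F p ⊔ G q)
    (a := p) (b := q) (m := a + b) ?_ (fun p' q' _ _ _ => h p' q' (by omega)) a b le_rfl
  · simpa [ha, hb] using hle
  rintro p' q' (hp | hq)
  · exact inf_le_left.trans ((hF hp).trans le_sup_left)
  · exact inf_le_right.trans ((hG hq).trans le_sup_right)

end Lattice

section ModularLattice

variable {α : Type*} [Lattice α] [IsModularLattice α]

theorem Codisjoint.inf_eq_inf_sup_inf [OrderTop α] {x x' y y' : α} (h : Codisjoint x' y')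
    (hx : x' ≤ x) (hy : y' ≤ y) : x ⊓ y = x' ⊓ y ⊔ x ⊓ y' := by
  calc x ⊓ y = (x' ⊔ y') ⊓ x ⊓ y := by rw [h.eq_top, top_inf_eq]
    _ = (x ⊓ y' ⊔ x') ⊓ y := by rw [sup_inf_assoc_of_le _ hx, sup_comm, inf_comm y']
    _ = x' ⊓ y ⊔ x ⊓ y' := by rw [sup_inf_assoc_of_le _ (inf_le_right.trans hy), sup_comm]

theorem isOpposite_of_isCompl [BoundedOrder α] {F G : ℤ → α} {n : ℤ} (hF : Antitone F)
    (hG : Antitone G) (h : ∀ p q, p + q = n + 1 → IsCompl (F p) (G q)) : IsOpposite F G n := by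
  intro p q hpq
  rcases lt_or_gt_of_ne hpq with hlt | hgt
  · have hcod : Codisjoint (F (p + 1)) (G (q + 1)) :=
      (h (p + 1) (n - p) (by ring)).codisjoint.mono_right (hG (by omega))
    exact (hcod.inf_eq_inf_sup_inf (hF (by omega)) (hG (by omega))).le
  · have hdis : Disjoint (F p) (G q) :=
      (h p (n + 1 - p) (by ring)).disjoint.mono_right (hG (by omega))
    simp [hdis.eq_bot]

end ModularLattice

theorem stmt6_general (K A : Type*) [Field K] [AddCommGroup A] [Module K A]
    (F G : ℤ → Submodule K A) (hF : Antitone F) (hG : Antitone G)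
    (hFtop : ∃ a, F a = ⊤) (hFbot : ∃ a, F a = ⊥)
    (hGtop : ∃ a, G a = ⊤) (hGbot : ∃ a, G a = ⊥) (n : ℤ) :
    (∀ p q : ℤ, p + q ≠ n →
        F p ⊓ G q ≤ (F (p + 1) ⊓ G q) ⊔ (F p ⊓ G (q + 1))) ↔
    (∀ p q : ℤ, p + q = n + 1 → IsCompl (F p) (G q)) := by
  refine ⟨fun hopp p q hpq => ?_, isOpposite_of_isCompl hF hG⟩
  obtain ⟨a₀, ha₀⟩ := hFtop
  obtain ⟨a, ha⟩ := hFbot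
  obtain ⟨b₀, hb₀⟩ := hGtop
  obtain ⟨b, hb⟩ := hGbot
  exact ⟨disjoint_iff.2 (IsOpposite.inf_eq_bot hopp hF hG ha hb (by omega)),
    codisjoint_iff.2 (IsOpposite.sup_eq_top hopp hF hG ha₀ hb₀ hpq.le)⟩

/-- Two finite decreasing filtrations `F` and `G` on a (finite-dimensional) vector space
`A` are `n`-opposite — i.e. `Gr_F^p Gr_G^q (A) = 0` for `p+q ≠ n`, expressed at the
subspace level as `F^p ∩ G^q ⊆ (F^{p+1} ∩ G^q) + (F^p ∩ G^{q+1})` — if and only if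
for all `p + q = n + 1` one has `F^p(A) ⊕ G^q(A) ≅ A`, i.e. `F^p` and `G^q` are
complementary. -/
theorem stmt6 (K A : Type*) [Field K] [AddCommGroup A] [Module K A]
    [FiniteDimensional K A]
    (F G : ℤ → Submodule K A) (hF : Antitone F) (hG : Antitone G)
    (hFtop : ∃ a, F a = ⊤) (hFbot : ∃ a, F a = ⊥)
    (hGtop : ∃ a, G a = ⊤) (hGbot : ∃ a, G a = ⊥) (n : ℤ) :
    (∀ p q : ℤ, p + q ≠ n →
        F p ⊓ G q ≤ (F (p + 1) ⊓ G q) ⊔ (F p ⊓ G (q + 1))) ↔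
    (∀ p q : ℤ, p + q = n + 1 → IsCompl (F p) (G q)) :=
  stmt6_general K A F G hF hG hFtop hFbot hGtop hGbot n
end

section
/- Let K be a cochain complex of vector spaces with a biregular decreasing filtration F by subcomplexes. The spectral sequence of (K,F) degenerates at E₁ (i.e. E₁ = E_∞) if and only if every differential d : K^i → K^{i+1} is strictly compatible with F, i.e. d(K^i) ∩ F^p K^{i+1} = d(F^p K^i) for all p, i. -/
/-!
For a filtered map `f : V → W`, the vanishing of all `d_r`, `r ≥ 1`, says: if `x ∈ F^q V` and
`f x ∈ F^{q+r} W`, then `f x` can be corrected by an element of `f (F^{q+1} V)` into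
`F^{q+r+1} W`. Starting from `F^a V = V` and raising the filtration level of the preimage one
step at a time shows `f(V) ∩ F^p W ⊆ f (F^p V) + f(V) ∩ F^{p+1} W`; as `F^b W = 0`, a downward
induction from `b` gives strictness. Conversely, strictness puts `f x` in
`f (F^{q+r} V) ⊆ f (F^{q+1} V)` already.
-/

open Submodule

theorem le_of_le_sup_succ_of_eq_bot {α : Type*} [SemilatticeSup α] [OrderBot α] {S T : ℤ → α}
    (hS : Antitone S) (hT : Antitone T) {b : ℤ} (hb : S b = ⊥)
    (hstep : ∀ p, S p ≤ T p ⊔ S (p + 1)) (p : ℤ) : S p ≤ T p := by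
  rcases le_total b p with hbp | hpb
  · exact (hS hbp).trans (hb ▸ bot_le)
  induction p, hpb using Int.leInductionDown with
  | base => exact hb ▸ bot_le
  | pred q _ ih =>
    calc S (q - 1) ≤ T (q - 1) ⊔ S q := by simpa using hstep (q - 1)
      _ ≤ T (q - 1) ⊔ T q := sup_le_sup_left ih _
      _ = T (q - 1) := sup_eq_left.mpr (hT (by omega))

namespace LinearMap

variable {R V W : Type*} [Ring R] [AddCommGroup V] [Module R V] [AddCommGroup W] [Module R W]

def StrictlyCompatible (f : V →ₗ[R] W) (FV : ℤ → Submodule R V) (FW : ℤ → Submodule R W) :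
    Prop :=
  ∀ p, map f (FV p) = range f ⊓ FW p

/-- The differentials `d_r`, `r ≥ 1`, of the spectral sequence of the filtered map vanish:
`f (Z_r^q) ⊆ B_r^{q+r}`. -/
def SpectralDifferentialsVanish (f : V →ₗ[R] W) (FV : ℤ → Submodule R V)
    (FW : ℤ → Submodule R W) : Prop :=
  ∀ r : ℤ, 1 ≤ r → ∀ q,
    map f (FV q ⊓ comap f (FW (q + r))) ≤ FW (q + r + 1) ⊔ map f (FV (q + 1))

variable {f : V →ₗ[R] W} {FV : ℤ → Submodule R V} {FW : ℤ → Submodule R W}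

theorem StrictlyCompatible.spectralDifferentialsVanish (hFV : Antitone FV)
    (hf : StrictlyCompatible f FV FW) : SpectralDifferentialsVanish f FV FW := by
  rintro r hr q _ ⟨x, hx, rfl⟩
  have hfx : f x ∈ map f (FV (q + r)) := hf (q + r) ▸ ⟨mem_range_self f x, hx.2⟩
  exact mem_sup_right (map_mono (hFV (by omega)) hfx)

theorem SpectralDifferentialsVanish.range_inf_le_map_sup_range_inf_succ
    (hf : SpectralDifferentialsVanish f FV FW) (hFV : Antitone FV) (hFW : Antitone FW) {a : ℤ}
    (ha : FV a = ⊤) (p : ℤ) : range f ⊓ FW p ≤ map f (FV p) ⊔ (range f ⊓ FW (p + 1)) := by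
  suffices key : ∀ q ≤ p, ∀ x ∈ FV q, f x ∈ FW p →
      f x ∈ map f (FV p) ⊔ (range f ⊓ FW (p + 1)) by
    rintro _ ⟨⟨x, rfl⟩, hx⟩
    exact key (min a p) (min_le_right a p) x (hFV (min_le_left a p) (ha ▸ mem_top)) hx
  intro q hqp
  induction q, hqp using Int.leInductionDown with
  | base => exact fun x hx _ => mem_sup_left ⟨x, hx, rfl⟩
  | pred q hqp ih =>
    intro x hx hfx
    have hvanish := hf (p - q + 1) (by omega) (q - 1) ⟨x, ⟨hx, by simpa using hfx⟩, rfl⟩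
    rw [show q - 1 + (p - q + 1) = p by ring, sub_add_cancel] at hvanish
    obtain ⟨w, hw, _, ⟨x', hx', rfl⟩, hsum⟩ := mem_sup.mp hvanish
    have hfx' : f x' ∈ FW p := by
      rw [eq_sub_of_add_eq' hsum]
      exact sub_mem hfx (hFW (Int.le_add_one le_rfl) hw)
    have hw_range : w ∈ range f ⊓ FW (p + 1) :=
      ⟨⟨x - x', by rw [map_sub, ← hsum, add_sub_cancel_right]⟩, hw⟩
    rw [← hsum]
    exact add_mem (mem_sup_right hw_range) (ih x' hx' hfx')

theorem SpectralDifferentialsVanish.strictlyCompatible (hf : SpectralDifferentialsVanish f FV FW)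
    (hf_map : ∀ p, map f (FV p) ≤ FW p) (hFV : Antitone FV) (hFW : Antitone FW) {a b : ℤ}
    (ha : FV a = ⊤) (hb : FW b = ⊥) : StrictlyCompatible f FV FW := by
  refine fun p => le_antisymm (le_inf map_le_range (hf_map p)) ?_
  refine le_of_le_sup_succ_of_eq_bot (fun p q hpq => inf_le_inf_left _ (hFW hpq))
    (fun p q hpq => map_mono (hFV hpq)) (by rw [hb, inf_bot_eq]) ?_ p
  exact hf.range_inf_le_map_sup_range_inf_succ hFV hFW ha

theorem spectralDifferentialsVanish_iff_strictlyCompatible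
    (hf_map : ∀ p, map f (FV p) ≤ FW p) (hFV : Antitone FV) (hFW : Antitone FW) {a b : ℤ}
    (ha : FV a = ⊤) (hb : FW b = ⊥) :
    SpectralDifferentialsVanish f FV FW ↔ StrictlyCompatible f FV FW :=
  ⟨fun h => h.strictlyCompatible hf_map hFV hFW ha hb, fun h => h.spectralDifferentialsVanish hFV⟩

end LinearMap

theorem stmt11_general (𝕜 : Type*) [Field 𝕜] (Kc : ℤ → Type*)
    [∀ n, AddCommGroup (Kc n)] [∀ n, Module 𝕜 (Kc n)]
    (d : ∀ i j : ℤ, Kc i →ₗ[𝕜] Kc j)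
    (hdd : ∀ i j k : ℤ, (d j k).comp (d i j) = 0)
    (F : ℤ → ∀ n : ℤ, Submodule 𝕜 (Kc n))
    (hFmono : ∀ p n, F (p + 1) n ≤ F p n)
    (hFd : ∀ p n m, Submodule.map (d n m) (F p n) ≤ F p m)
    (hFtop : ∀ n, ∃ a, F a n = ⊤) (hFbot : ∀ n, ∃ b, F b n = ⊥) :
    let Z : ℤ → ℤ → ∀ n : ℤ, Submodule 𝕜 (Kc n) := fun r p n =>
      F p n ⊓ Submodule.comap (d n (n + 1)) (F (p + r) (n + 1))
    let B : ℤ → ℤ → ∀ n : ℤ, Submodule 𝕜 (Kc n) := fun r p n =>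
      F (p + 1) n ⊔ Submodule.map (d (n - 1) n) (F (p - r + 1) (n - 1))
    (∀ r : ℤ, 1 ≤ r → ∀ p n : ℤ,
        Submodule.map (d n (n + 1)) (Z r p n) ≤
          B r (p + r) (n + 1) ⊓ Z r (p + r) (n + 1)) ↔
    (∀ p n : ℤ,
        Submodule.map (d n (n + 1)) (F p n) =
          LinearMap.range (d n (n + 1)) ⊓ F p (n + 1)) := by
  intro Z B
  have hFanti : ∀ n, Antitone (F · n) := fun n => antitone_int_of_succ_le (hFmono · n)
  have hdZ : ∀ r p n, map (d n (n + 1)) (Z r p n) ≤ Z r (p + r) (n + 1) := by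
    rintro r p n _ ⟨x, hx, rfl⟩
    refine ⟨hx.2, ?_⟩
    simp [← LinearMap.comp_apply, hdd]
  have hB : ∀ r p n,
      B r (p + r) (n + 1) = F (p + r + 1) (n + 1) ⊔ map (d n (n + 1)) (F (p + 1) n) := by
    intro r p n
    simp only [B, add_sub_cancel_right]
    rw [add_sub_cancel_right]
  calc _ ↔ ∀ n, LinearMap.SpectralDifferentialsVanish (d n (n + 1)) (F · n) (F · (n + 1)) := by
        simp only [le_inf_iff, hdZ, and_true, hB]
        exact ⟨fun h n r hr p => h r hr p n, fun h r hr p n => h n r hr p⟩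
    _ ↔ ∀ n, LinearMap.StrictlyCompatible (d n (n + 1)) (F · n) (F · (n + 1)) := by
        refine forall_congr' fun n => ?_
        obtain ⟨a, ha⟩ := hFtop n
        obtain ⟨b, hb⟩ := hFbot (n + 1)
        exact LinearMap.spectralDifferentialsVanish_iff_strictlyCompatible
          (hFd · n (n + 1)) (hFanti n) (hFanti (n + 1)) ha hb
    _ ↔ _ := forall_comm

/-- Let `K` be a cochain complex of vector spaces (given by `d i j : K i → K j`, zero
unless `j = i+1`, with `d ∘ d = 0`) with a biregular decreasing filtration `F` by
subcomplexes.  With `Z_r^{p,n} = F^p K^n ∩ d⁻¹(F^{p+r} K^{n+1})` and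
`B_r^{p,n} = F^{p+1} K^n + d(F^{p-r+1} K^{n-1})`, the spectral sequence of `(K,F)`
degenerates at `E₁` (all differentials `d_r`, `r ≥ 1`, vanish, i.e.
`d(Z_r^{p,n}) ⊆ B_r ∩ Z_r` at the `(p+r, n+1)` spot) if and only if every differential
`d : K^n → K^{n+1}` is strictly compatible with `F`, i.e.
`d(K^n) ∩ F^p K^{n+1} = d(F^p K^n)` for all `p, n`. -/
theorem stmt11 (𝕜 : Type*) [Field 𝕜] (Kc : ℤ → Type*)
    [∀ n, AddCommGroup (Kc n)] [∀ n, Module 𝕜 (Kc n)]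
    (d : ∀ i j : ℤ, Kc i →ₗ[𝕜] Kc j)
    (hd0 : ∀ i j : ℤ, j ≠ i + 1 → d i j = 0)
    (hdd : ∀ i j k : ℤ, (d j k).comp (d i j) = 0)
    (F : ℤ → ∀ n : ℤ, Submodule 𝕜 (Kc n))
    (hFmono : ∀ p n, F (p + 1) n ≤ F p n)
    (hFd : ∀ p n m, Submodule.map (d n m) (F p n) ≤ F p m)
    (hFtop : ∀ n, ∃ a, F a n = ⊤) (hFbot : ∀ n, ∃ b, F b n = ⊥) :
    let Z : ℤ → ℤ → ∀ n : ℤ, Submodule 𝕜 (Kc n) := fun r p n =>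
      F p n ⊓ Submodule.comap (d n (n + 1)) (F (p + r) (n + 1))
    let B : ℤ → ℤ → ∀ n : ℤ, Submodule 𝕜 (Kc n) := fun r p n =>
      F (p + 1) n ⊔ Submodule.map (d (n - 1) n) (F (p - r + 1) (n - 1))
    (∀ r : ℤ, 1 ≤ r → ∀ p n : ℤ,
        Submodule.map (d n (n + 1)) (Z r p n) ≤
          B r (p + r) (n + 1) ⊓ Z r (p + r) (n + 1)) ↔
    (∀ p n : ℤ,
        Submodule.map (d n (n + 1)) (F p n) =
          LinearMap.range (d n (n + 1)) ⊓ F p (n + 1)) :=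
  stmt11_general 𝕜 Kc d hdd F hFmono hFd hFtop hFbot
end

section
/- Let H be a mixed Hodge structure with weight filtration W on H_ℚ and Hodge filtration F on H_ℂ. Define I^{p,q} = (F^p ∩ W_{p+q}) ∩ (F̄^q ∩ W_{p+q} + Σ_{i≥2} F̄^{q−i+1} ∩ W_{p+q−i}) in H_ℂ. Then the projection W_{p+q} → Gr^W_{p+q} H_ℂ induces an isomorphism I^{p,q} ≅ H^{p,q}(Gr^W_{p+q}), and moreover W_n ⊗ ℂ = ⊕_{p+q≤n} I^{p,q} and F^p = ⊕_{p'≥p, q'} I^{p',q'}. -/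
/-!
Everything happens in the modular lattice of subspaces. On `Gr^W_n` the images of `F` and `F̄`
are `n`-opposed, which splits `Gr^W_n` into the `H^{p,q}` and kills `F^p ∩ F̄^{q'}` there when
`p + q' > n`. The correction terms of `I^{p,q}` are the `F̄^{j-p+1} ∩ W_j`, and an upward induction
on `j` using this vanishing shows that `F^p` meets their sum trivially; hence `I^{p,q} → H^{p,q}`
is injective. Since `Gr^W_j = F^p + F̄^{j-p+1}`, any lift in `F^p ∩ W_{p+q}` of a class in
`H^{p,q}` can be corrected weight by weight into `I^{p,q}`. The decompositions of `W_n` and `F^p`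
then follow by induction on the weight, and independence by peeling off the top weight.
-/

@[elab_as_elim]
theorem Int.induction_of_forall_le {P : ℤ → Prop} (a : ℤ) (base : ∀ n ≤ a, P n)
    (step : ∀ n, a < n → P (n - 1) → P n) (n : ℤ) : P n :=
  Int.inductionOn' n a (base a le_rfl)
    (fun k hk ih => step (k + 1) (by omega) (by rwa [add_sub_cancel_right]))
    (fun k hk _ => base (k - 1) (by omega))

@[elab_as_elim]
theorem Int.induction_of_forall_ge {P : ℤ → Prop} (a : ℤ) (base : ∀ n, a ≤ n → P n)
    (step : ∀ n < a, P (n + 1) → P n) (n : ℤ) : P n :=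
  Int.inductionOn' n a (base a le_rfl)
    (fun k hk _ => base (k + 1) (by omega))
    (fun k hk ih => step (k - 1) (by omega) (by rwa [sub_add_cancel]))

section

variable {α : Type*}

/-- `Gr_A^p Gr_B^q = 0` whenever `p + q ≠ m`, phrased without quotients. -/
def IsOpposed [Lattice α] (m : ℤ) (A B : ℤ → α) : Prop :=
  ∀ p q, p + q ≠ m → A p ⊓ B q ≤ A (p + 1) ⊓ B q ⊔ A p ⊓ B (q + 1)

namespace IsOpposed

section Lattice

variable [Lattice α] {m : ℤ} {A B : ℤ → α}

theorem inf_le_of_lt (h : IsOpposed m A B) (hA : Antitone A) (hB : Antitone B) {L : α}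
    {a b : ℤ} (ha : A a ≤ L) (hb : B b ≤ L) {p q : ℤ} (hpq : m < p + q) : A p ⊓ B q ≤ L := by
  suffices key : ∀ s, m < s → ∀ p q, p + q = s → A p ⊓ B q ≤ L from key _ hpq p q rfl
  intro s
  induction s using Int.induction_of_forall_ge (a + b) with
  | base s hs =>
    intro _ p q hpq
    rcases le_or_gt a p with hap | hpa
    · exact inf_le_left.trans ((hA hap).trans ha)
    · exact inf_le_right.trans ((hB (by omega)).trans hb)
  | step s _ ih =>
    intro hs p q hpq
    exact (h p q (by omega)).trans
      (sup_le (ih (by omega) _ _ (by omega)) (ih (by omega) _ _ (by omega)))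

theorem le_inf_sup_succ (h : IsOpposed m A B) (hB : Antitone B) {r t : ℤ} (hr : A r ≤ B t) :
    A r ≤ A r ⊓ B (m - r) ⊔ A (r + 1) := by
  have key : ∀ t, A r ⊓ B t ≤ A r ⊓ B (m - r) ⊔ A (r + 1) := by
    intro t
    induction t using Int.induction_of_forall_ge (m - r) with
    | base t ht => exact le_sup_of_le_left (inf_le_inf_left _ (hB ht))
    | step t ht ih => exact (h r t (by omega)).trans (sup_le (le_sup_of_le_right inf_le_left) ih)
  simpa only [inf_eq_left.mpr hr] using key t

theorem inf_inf_sup_succ_le [IsModularLattice α] (h : IsOpposed m A B) (hA : Antitone A)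
    (hB : Antitone B) {L : α} {a b p q : ℤ} (ha : A a ≤ L) (hb : B b ≤ L) (hL : L ≤ A (p + 1))
    (hpq : p + q = m) : A p ⊓ B q ⊓ (A (p + 1) ⊔ B (q + 1)) ≤ L := by
  have hF : A p ⊓ (A (p + 1) ⊔ B (q + 1)) ≤ A (p + 1) := by
    rw [inf_comm]
    refine (sup_inf_le_assoc_of_le _ (hA (by omega))).trans (sup_le le_rfl ?_)
    rw [inf_comm]
    exact (h.inf_le_of_lt hA hB ha hb (by omega)).trans hL
  calc A p ⊓ B q ⊓ (A (p + 1) ⊔ B (q + 1)) ≤ A (p + 1) ⊓ B q :=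
        le_inf ((inf_le_inf_right _ inf_le_left).trans hF) (inf_le_left.trans inf_le_right)
    _ ≤ L := h.inf_le_of_lt hA hB ha hb (by omega)

end Lattice

section CompleteLattice

variable [CompleteLattice α] {m : ℤ} {A B : ℤ → α}

theorem le_iSup_inf (h : IsOpposed m A B) (hA : Antitone A) (hB : Antitone B) {a t : ℤ}
    (ha : ∀ q, A a ≤ B q) (ht : ∀ p, A p ≤ B t) (r : ℤ) :
    A r ≤ ⨆ (p) (_ : r ≤ p), A p ⊓ B (m - p) := by
  induction r using Int.induction_of_forall_ge a with
  | base r hr => exact le_iSup₂_of_le r le_rfl (le_inf le_rfl ((hA hr).trans (ha _)))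
  | step r _ ih =>
    refine (h.le_inf_sup_succ hB (ht r)).trans
      (sup_le (le_iSup₂_of_le r le_rfl le_rfl) (ih.trans ?_))
    exact iSup₂_le fun p hp => le_iSup₂_of_le p (by omega) le_rfl

theorem le_sup_of_add_eq (h : IsOpposed m A B) (hA : Antitone A) (hB : Antitone B) {a t : ℤ}
    (ha : ∀ q, A a ≤ B q) (ht : ∀ p, A p ≤ B t) {p q : ℤ} (hpq : p + q = m + 1) (r : ℤ) :
    A r ≤ A p ⊔ B q :=
  (h.le_iSup_inf hA hB ha ht r).trans <| iSup₂_le fun p' _ => by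
    rcases le_or_gt p p' with hp | hp
    · exact le_sup_of_le_left (inf_le_left.trans (hA hp))
    · exact le_sup_of_le_right (inf_le_right.trans (hB (by omega)))

end CompleteLattice

end IsOpposed

namespace MixedHodge

section Filtrations

variable [CompleteLattice α] (W F : ℤ → α)

/-- The image of `F^p` in `Gr^W_m = W m / W (m - 1)`, represented by its preimage in `W m`. -/
def gr (m p : ℤ) : α := F p ⊓ W m ⊔ W (m - 1)

variable {W F}

theorem gr_le (hW : Monotone W) (m p : ℤ) : gr W F m p ≤ W m :=
  sup_le inf_le_right (hW (by omega))

theorem W_sub_one_le_gr (m p : ℤ) : W (m - 1) ≤ gr W F m p := le_sup_right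

theorem antitone_gr (hF : Antitone F) (m : ℤ) : Antitone (gr W F m) := fun _ _ h =>
  sup_le_sup_right (inf_le_inf_right _ (hF h)) _

theorem gr_eq_W_of_eq_top (hW : Monotone W) {p : ℤ} (hp : F p = ⊤) (m : ℤ) :
    gr W F m p = W m := by
  rw [gr, hp, top_inf_eq, sup_eq_left.mpr (hW (by omega))]

theorem gr_eq_W_sub_one_of_eq_bot {p : ℤ} (hp : F p = ⊥) (m : ℤ) : gr W F m p = W (m - 1) := by
  rw [gr, hp, bot_inf_eq, bot_sup_eq]

end Filtrations

/-- The lattice-theoretic content of a mixed Hodge structure, with `Fb` standing for `F̄`. -/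
structure IsMixedHodge [CompleteLattice α] (W F Fb : ℤ → α) : Prop where
  monotone_W : Monotone W
  antitone_F : Antitone F
  antitone_Fb : Antitone Fb
  exists_W_eq_bot : ∃ n, W n = ⊥
  exists_W_eq_top : ∃ n, W n = ⊤
  exists_F_eq_top : ∃ p, F p = ⊤
  exists_F_eq_bot : ∃ p, F p = ⊥
  exists_Fb_eq_top : ∃ p, Fb p = ⊤
  exists_Fb_eq_bot : ∃ p, Fb p = ⊥
  isOpposed : ∀ n, IsOpposed n (gr W F n) (gr W Fb n)

namespace IsMixedHodge

variable [CompleteLattice α] {W F Fb : ℤ → α} (h : IsMixedHodge W F Fb)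
include h

theorem W_eq_bot_of_le {a n : ℤ} (ha : W a = ⊥) (hn : n ≤ a) : W n = ⊥ :=
  le_bot_iff.mp (ha ▸ h.monotone_W hn)

theorem gr_inf_gr_le_of_lt {n p q : ℤ} (hpq : n < p + q) :
    gr W F n p ⊓ gr W Fb n q ≤ W (n - 1) := by
  obtain ⟨a, ha⟩ := h.exists_F_eq_bot
  obtain ⟨b, hb⟩ := h.exists_Fb_eq_bot
  exact (h.isOpposed n).inf_le_of_lt (antitone_gr h.antitone_F n) (antitone_gr h.antitone_Fb n)
    (gr_eq_W_sub_one_of_eq_bot ha n).le (gr_eq_W_sub_one_of_eq_bot hb n).le hpq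

theorem gr_le_iSup_gr_inf_gr (n r : ℤ) :
    gr W F n r ≤ ⨆ (p) (_ : r ≤ p), gr W F n p ⊓ gr W Fb n (n - p) := by
  obtain ⟨a, ha⟩ := h.exists_F_eq_bot
  obtain ⟨t, ht⟩ := h.exists_Fb_eq_top
  refine (h.isOpposed n).le_iSup_inf (antitone_gr h.antitone_F n) (antitone_gr h.antitone_Fb n)
    (a := a) (t := t) (fun q => ?_) (fun p => ?_) r
  · exact (gr_eq_W_sub_one_of_eq_bot ha n).trans_le (W_sub_one_le_gr n q)
  · exact (gr_le h.monotone_W n p).trans (gr_eq_W_of_eq_top h.monotone_W ht n).ge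

theorem W_le_gr_sup_gr {n p q : ℤ} (hpq : p + q = n + 1) : W n ≤ gr W F n p ⊔ gr W Fb n q := by
  obtain ⟨a, ha⟩ := h.exists_F_eq_bot
  obtain ⟨t, ht⟩ := h.exists_Fb_eq_top
  obtain ⟨s, hs⟩ := h.exists_F_eq_top
  rw [← gr_eq_W_of_eq_top h.monotone_W hs n]
  refine (h.isOpposed n).le_sup_of_add_eq (antitone_gr h.antitone_F n)
    (antitone_gr h.antitone_Fb n) (a := a) (t := t) (fun q => ?_) (fun p => ?_) hpq s
  · exact (gr_eq_W_sub_one_of_eq_bot ha n).trans_le (W_sub_one_le_gr n q)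
  · exact (gr_le h.monotone_W n p).trans (gr_eq_W_of_eq_top h.monotone_W ht n).ge

theorem gr_inf_gr_inf_sup_le [IsModularLattice α] {n p q : ℤ} (hpq : p + q = n) :
    gr W F n p ⊓ gr W Fb n q ⊓ (gr W F n (p + 1) ⊔ gr W Fb n (q + 1)) ≤ W (n - 1) := by
  obtain ⟨a, ha⟩ := h.exists_F_eq_bot
  obtain ⟨b, hb⟩ := h.exists_Fb_eq_bot
  exact (h.isOpposed n).inf_inf_sup_succ_le (antitone_gr h.antitone_F n)
    (antitone_gr h.antitone_Fb n) (gr_eq_W_sub_one_of_eq_bot ha n).le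
    (gr_eq_W_sub_one_of_eq_bot hb n).le (W_sub_one_le_gr n _) hpq

end IsMixedHodge

section Tail

variable [CompleteLattice α] (W Fb : ℤ → α)

/-- `∑_{j ≤ n} F̄^{j-p+1} ∩ W_j`; the correction term in `deligneI p q` is `tail p (p + q - 2)`. -/
def tail (p n : ℤ) : α := ⨆ (j) (_ : j ≤ n), Fb (j - p + 1) ⊓ W j

variable {W Fb}

theorem tail_le (hW : Monotone W) (p n : ℤ) : tail W Fb p n ≤ W n :=
  iSup₂_le fun _ hj => inf_le_right.trans (hW hj)

theorem le_tail {p j n : ℤ} (hj : j ≤ n) : Fb (j - p + 1) ⊓ W j ≤ tail W Fb p n :=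
  le_iSup₂_of_le j hj le_rfl

theorem tail_eq_sup (p n : ℤ) :
    tail W Fb p n = Fb (n - p + 1) ⊓ W n ⊔ tail W Fb p (n - 1) := by
  refine le_antisymm (iSup₂_le fun j hj => ?_) (sup_le (le_tail le_rfl) ?_)
  · rcases hj.eq_or_lt with rfl | hj
    · exact le_sup_left
    · exact le_sup_of_le_right (le_tail (by omega))
  · exact iSup₂_le fun j hj => le_tail (by omega)

theorem tail_add_sub_one (p q : ℤ) :
    tail W Fb p (p + q - 1) = Fb q ⊓ W (p + q - 1) ⊔ tail W Fb p (p + q - 2) := by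
  rw [tail_eq_sup, show p + q - 1 - p + 1 = q by ring, show p + q - 1 - 1 = p + q - 2 by ring]

theorem inf_W_le_sup_tail (hW : Monotone W) {p q j : ℤ} (hj : j ≤ p + q - 1) :
    Fb (j - p + 1) ⊓ W j ≤ Fb q ⊓ W (p + q) ⊔ tail W Fb p (p + q - 2) := by
  refine (le_tail hj).trans ?_
  rw [tail_add_sub_one]
  exact sup_le_sup_right (inf_le_inf_left _ (hW (by omega))) _

theorem tail_inf_W_sub_one_le [IsModularLattice α] (hW : Monotone W) (hFb : Antitone Fb)
    (p n : ℤ) : tail W Fb p n ⊓ W (n - 1) ≤ tail W Fb p (n - 1) := by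
  rw [tail_eq_sup, sup_comm]
  refine (sup_inf_le_assoc_of_le _ (tail_le hW p (n - 1))).trans (sup_le le_rfl ?_)
  refine (le_inf ?_ inf_le_right).trans (le_tail le_rfl)
  exact inf_le_left.trans (inf_le_left.trans (hFb (by omega)))

theorem iSup_two_le_eq_tail (p q : ℤ) :
    ⨆ (i : ℤ) (_ : 2 ≤ i), Fb (q - i + 1) ⊓ W (p + q - i) = tail W Fb p (p + q - 2) := by
  refine le_antisymm (iSup₂_le fun i hi => le_iSup₂_of_le (p + q - i) (by omega) ?_)
    (iSup₂_le fun j hj => le_iSup₂_of_le (p + q - j) (by omega) ?_)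
  · rw [show p + q - i - p + 1 = q - i + 1 by ring]
  · rw [show q - (p + q - j) + 1 = j - p + 1 by ring, show p + q - (p + q - j) = j by ring]

end Tail

section DeligneSplitting

variable [CompleteLattice α] (W F Fb : ℤ → α)

def deligneI (p q : ℤ) : α :=
  (F p ⊓ W (p + q)) ⊓
    ((Fb q ⊓ W (p + q)) ⊔ ⨆ (i : ℤ) (_ : 2 ≤ i), Fb (q - i + 1) ⊓ W (p + q - i))

variable {W F Fb}

theorem deligneI_eq_tail (p q : ℤ) :
    deligneI W F Fb p q = F p ⊓ W (p + q) ⊓ (Fb q ⊓ W (p + q) ⊔ tail W Fb p (p + q - 2)) := by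
  rw [deligneI, iSup_two_le_eq_tail]

theorem deligneI_le (p q : ℤ) : deligneI W F Fb p q ≤ F p ⊓ W (p + q) := inf_le_left

theorem deligneI_le_gr_left (p q : ℤ) : deligneI W F Fb p q ≤ gr W F (p + q) p :=
  inf_le_left.trans le_sup_left

theorem deligneI_le_gr_right (hW : Monotone W) (p q : ℤ) :
    deligneI W F Fb p q ≤ gr W Fb (p + q) q := by
  rw [deligneI_eq_tail]
  exact inf_le_right.trans (sup_le_sup_left ((tail_le hW p _).trans (hW (by omega))) _)

theorem deligneI_le_gr_sup_gr (hW : Monotone W) (hF : Antitone F) (hFb : Antitone Fb)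
    {p q p' q' : ℤ} (hne : (p', q') ≠ (p, q)) (hw : p' + q' ≤ p + q) :
    deligneI W F Fb p' q' ≤ gr W F (p + q) (p + 1) ⊔ gr W Fb (p + q) (q + 1) := by
  rcases hw.lt_or_eq with hw | hw
  · exact le_sup_of_le_left (((deligneI_le p' q').trans inf_le_right).trans
      ((hW (by omega)).trans (W_sub_one_le_gr _ _)))
  rcases lt_or_ge p p' with hp | hp
  · refine le_sup_of_le_left ((deligneI_le_gr_left p' q').trans ?_)
    rw [hw]
    exact antitone_gr hF _ (by omega)
  · refine le_sup_of_le_right ((deligneI_le_gr_right hW p' q').trans ?_)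
    have hp' : p' ≠ p := fun hpp => hne (Prod.ext hpp (show q' = q by omega))
    rw [hw]
    exact antitone_gr hFb _ (by omega)

end DeligneSplitting

namespace IsMixedHodge

variable [CompleteLattice α] [IsModularLattice α] {W F Fb : ℤ → α} (h : IsMixedHodge W F Fb)
include h

theorem inf_tail_eq_bot (p n : ℤ) : F p ⊓ tail W Fb p n = ⊥ := by
  obtain ⟨a, ha⟩ := h.exists_W_eq_bot
  induction n using Int.induction_of_forall_le a with
  | base n hn => exact le_bot_iff.mp (inf_le_right.trans
      ((tail_le h.monotone_W p n).trans (h.W_eq_bot_of_le ha hn).le))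
  | step n _ ih =>
    have hgr : F p ⊓ tail W Fb p n ≤ gr W F n p ⊓ gr W Fb n (n - p + 1) := by
      refine le_inf (le_sup_of_le_left (inf_le_inf_left _ (tail_le h.monotone_W p n))) ?_
      rw [tail_eq_sup]
      exact inf_le_right.trans (sup_le_sup_left (tail_le h.monotone_W p _) _)
    have hle : F p ⊓ tail W Fb p n ≤ W (n - 1) := hgr.trans (h.gr_inf_gr_le_of_lt (by omega))
    refine le_bot_iff.mp (ih ▸ le_inf inf_le_left ?_)
    exact (le_inf inf_le_right hle).trans (tail_inf_W_sub_one_le h.monotone_W h.antitone_Fb p n)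

theorem deligneI_inf_W (p q : ℤ) : deligneI W F Fb p q ⊓ W (p + q - 1) = ⊥ := by
  refine le_bot_iff.mp (le_trans ?_ (h.inf_tail_eq_bot p (p + q - 1)).le)
  have hT : tail W Fb p (p + q - 2) ≤ W (p + q - 1) :=
    (tail_le h.monotone_W p _).trans (h.monotone_W (by omega))
  rw [deligneI_eq_tail, tail_add_sub_one]
  refine le_inf (inf_le_left.trans (inf_le_left.trans inf_le_left)) ?_
  calc _ ≤ (tail W Fb p (p + q - 2) ⊔ Fb q ⊓ W (p + q)) ⊓ W (p + q - 1) :=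
        inf_le_inf_right _ (inf_le_right.trans (sup_comm _ _).le)
    _ ≤ tail W Fb p (p + q - 2) ⊔ Fb q ⊓ W (p + q) ⊓ W (p + q - 1) :=
        sup_inf_le_assoc_of_le _ hT
    _ ≤ _ := by rw [inf_assoc, inf_eq_right.mpr (h.monotone_W (by omega)), sup_comm]

theorem inf_sup_W_le_deligneI_sup {p q j : ℤ} (hj : j ≤ p + q - 1) :
    F p ⊓ W (p + q) ⊓ (Fb q ⊓ W (p + q) ⊔ tail W Fb p (p + q - 2) ⊔ W j) ≤
      deligneI W F Fb p q ⊔ W (p + q - 1) := by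
  obtain ⟨a, ha⟩ := h.exists_W_eq_bot
  induction j using Int.induction_of_forall_le a with
  | base j hja =>
    rw [h.W_eq_bot_of_le ha hja, sup_bot_eq, ← deligneI_eq_tail]
    exact le_sup_left
  | step j _ ih =>
    set A := Fb q ⊓ W (p + q) ⊔ tail W Fb p (p + q - 2)
    have hWj : A ⊔ W j ≤ A ⊔ W (j - 1) ⊔ F p ⊓ W j := by
      refine sup_le (le_sup_of_le_left le_sup_left)
        ((h.W_le_gr_sup_gr (p := p) (q := j - p + 1) (by ring)).trans (sup_le ?_ ?_))
      · exact sup_le le_sup_right (le_sup_of_le_left le_sup_right)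
      · exact sup_le (le_sup_of_le_left (le_sup_of_le_left (inf_W_le_sup_tail h.monotone_W hj)))
          (le_sup_of_le_left le_sup_right)
    calc F p ⊓ W (p + q) ⊓ (A ⊔ W j)
        ≤ F p ⊓ W (p + q) ⊓ (A ⊔ W (j - 1) ⊔ F p ⊓ W j) := inf_le_inf_left _ hWj
      _ ≤ F p ⊓ W (p + q) ⊓ (A ⊔ W (j - 1)) ⊔ F p ⊓ W j :=
          inf_sup_le_assoc_of_le _ (inf_le_inf_left _ (h.monotone_W (by omega)))
      _ ≤ _ := sup_le (ih (by omega)) (le_sup_of_le_right (inf_le_right.trans (h.monotone_W hj)))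

theorem deligneI_sup_W (p q : ℤ) :
    deligneI W F Fb p q ⊔ W (p + q - 1) = gr W F (p + q) p ⊓ gr W Fb (p + q) q := by
  refine le_antisymm (sup_le (le_inf (deligneI_le_gr_left p q)
    (deligneI_le_gr_right h.monotone_W p q)) (le_inf (W_sub_one_le_gr ..) (W_sub_one_le_gr ..))) ?_
  calc gr W F (p + q) p ⊓ gr W Fb (p + q) q
      ≤ W (p + q - 1) ⊔ F p ⊓ W (p + q) ⊓ gr W Fb (p + q) q := by
        rw [gr, sup_comm]
        exact sup_inf_le_assoc_of_le _ (W_sub_one_le_gr _ _)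
    _ ≤ W (p + q - 1) ⊔ F p ⊓ W (p + q) ⊓
          (Fb q ⊓ W (p + q) ⊔ tail W Fb p (p + q - 2) ⊔ W (p + q - 1)) :=
        sup_le_sup_left (inf_le_inf_left _ (sup_le_sup_right le_sup_left _)) _
    _ ≤ _ := sup_le le_sup_right (h.inf_sup_W_le_deligneI_sup le_rfl)

theorem gr_le_iSup_deligneI_sup (n r : ℤ) :
    gr W F n r ≤ (⨆ (p) (_ : r ≤ p), deligneI W F Fb p (n - p)) ⊔ W (n - 1) := by
  refine (h.gr_le_iSup_gr_inf_gr n r).trans (iSup₂_le fun p hp => ?_)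
  have hp' := h.deligneI_sup_W p (n - p)
  rw [add_sub_cancel] at hp'
  rw [← hp']
  exact sup_le_sup_right (le_iSup₂_of_le (f := fun p _ => deligneI W F Fb p (n - p)) p hp le_rfl) _

theorem W_eq_iSup_deligneI (n : ℤ) :
    W n = ⨆ (p) (q) (_ : p + q ≤ n), deligneI W F Fb p q := by
  refine le_antisymm ?_ (iSup_le fun p => iSup₂_le fun q hpq =>
    ((deligneI_le p q).trans inf_le_right).trans (h.monotone_W hpq))
  obtain ⟨a, ha⟩ := h.exists_W_eq_bot
  obtain ⟨t, ht⟩ := h.exists_F_eq_top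
  induction n using Int.induction_of_forall_le a with
  | base n hn => exact (h.W_eq_bot_of_le ha hn).trans_le bot_le
  | step n _ ih =>
    rw [← gr_eq_W_of_eq_top h.monotone_W ht n]
    refine (h.gr_le_iSup_deligneI_sup n t).trans (sup_le ?_ (ih.trans ?_))
    · exact iSup₂_le fun p _ => le_iSup_of_le p (le_iSup₂_of_le (n - p) (by omega) le_rfl)
    · exact iSup_mono fun p => iSup₂_mono' fun q hpq => ⟨q, by omega, le_rfl⟩

theorem F_eq_iSup_deligneI (p : ℤ) :
    F p = ⨆ (p') (_ : p ≤ p') (q'), deligneI W F Fb p' q' := by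
  have hle : (⨆ (p') (_ : p ≤ p') (q'), deligneI W F Fb p' q') ≤ F p :=
    iSup₂_le fun p' hp' => iSup_le fun q' =>
      ((deligneI_le p' q').trans inf_le_left).trans (h.antitone_F hp')
  refine le_antisymm ?_ hle
  obtain ⟨a, ha⟩ := h.exists_W_eq_bot
  obtain ⟨b, hb⟩ := h.exists_W_eq_top
  suffices key : ∀ n, F p ⊓ W n ≤ ⨆ (p') (_ : p ≤ p') (q'), deligneI W F Fb p' q' by
    simpa only [hb, inf_top_eq] using key b
  intro n
  induction n using Int.induction_of_forall_le a with
  | base n hn => exact inf_le_right.trans ((h.W_eq_bot_of_le ha hn).trans_le bot_le)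
  | step n _ ih =>
    have hS : (⨆ (p') (_ : p ≤ p'), deligneI W F Fb p' (n - p')) ≤
        ⨆ (p') (_ : p ≤ p') (q'), deligneI W F Fb p' q' :=
      iSup₂_mono fun p' _ => le_iSup_of_le (n - p') le_rfl
    calc F p ⊓ W n
        ≤ F p ⊓ (W (n - 1) ⊔ ⨆ (p') (_ : p ≤ p'), deligneI W F Fb p' (n - p')) :=
          le_inf inf_le_left
            (le_sup_left.trans ((h.gr_le_iSup_deligneI_sup n p).trans (sup_comm _ _).le))
      _ ≤ F p ⊓ W (n - 1) ⊔ ⨆ (p') (_ : p ≤ p'), deligneI W F Fb p' (n - p') :=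
          inf_sup_le_assoc_of_le _ (hS.trans hle)
      _ ≤ _ := sup_le ih hS

theorem disjoint_deligneI_gr_sup_gr (p q : ℤ) :
    Disjoint (deligneI W F Fb p q) (gr W F (p + q) (p + 1) ⊔ gr W Fb (p + q) (q + 1)) := by
  rw [disjoint_iff, ← le_bot_iff, ← h.deligneI_inf_W p q]
  refine le_inf inf_le_left ((inf_le_inf_right _ (le_inf (deligneI_le_gr_left p q)
    (deligneI_le_gr_right h.monotone_W p q))).trans (h.gr_inf_gr_inf_sup_le rfl))

theorem iSupIndep_deligneI [IsCompactlyGenerated α] :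
    iSupIndep fun pq : ℤ × ℤ => deligneI W F Fb pq.1 pq.2 := by
  classical
  rw [iSupIndep_iff_supIndep]
  intro s
  induction s using Finset.induction_on_max_value (fun pq : ℤ × ℤ => pq.1 + pq.2) with
  | empty => exact Finset.supIndep_empty _
  | insert a s ha hmax ih =>
    refine ih.insert ((h.disjoint_deligneI_gr_sup_gr a.1 a.2).mono_right (Finset.sup_le ?_))
    intro b hb
    exact deligneI_le_gr_sup_gr h.monotone_W h.antitone_F h.antitone_Fb
      (fun hba => ha (by rwa [← Prod.mk.eta (p := a), ← hba])) (hmax b hb)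

end IsMixedHodge

end MixedHodge

end

section SubmoduleImage

variable {R M N : Type*} [Semiring R] [AddCommMonoid M] [Module R M] [AddCommMonoid N]
  [Module R N] {σ : M → N} {P : Submodule R N}

theorem Submodule.eq_top_of_coe_eq_image_top (hσ : Function.Surjective σ)
    (h : (P : Set N) = σ '' (⊤ : Submodule R M)) : P = ⊤ :=
  SetLike.coe_injective (by rw [h, Submodule.top_coe, Set.image_univ, hσ.range_eq, top_coe])

theorem Submodule.eq_bot_of_coe_eq_image_bot (h : (P : Set N) = σ '' (⊥ : Submodule R M)) :
    P = ⊥ := by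
  have hP : (P : Set N) = {σ 0} := by rw [h, Submodule.bot_coe, Set.image_singleton]
  have hσ : σ 0 = 0 := (Set.mem_singleton_iff.mp (hP ▸ P.zero_mem)).symm
  exact SetLike.coe_injective (by rw [hP, hσ, Submodule.bot_coe])

end SubmoduleImage

theorem stmt18_general (H : Type*) [AddCommGroup H] [Module ℂ H]
    (σ : H → H)
    (σinv : ∀ x, σ (σ x) = x)
    (W : ℤ → Submodule ℂ H) (hW : Monotone W)
    (hWbot : ∃ a, W a = ⊥) (hWtop : ∃ a, W a = ⊤)
    (F : ℤ → Submodule ℂ H) (hF : Antitone F)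
    (hFtop : ∃ a, F a = ⊤) (hFbot : ∃ a, F a = ⊥)
    (Fbar : ℤ → Submodule ℂ H)
    (hFbar : ∀ p : ℤ, (Fbar p : Set H) = σ '' (F p : Set H))
    -- `F` and `F̄` induce an `n`-opposite pair on each `Gr^W_n`
    -- (expressed at the subspace level) :
    (hHS : ∀ n p q : ℤ, p + q ≠ n →
      ((F p ⊓ W n) ⊔ W (n - 1)) ⊓ ((Fbar q ⊓ W n) ⊔ W (n - 1)) ≤
        (((F (p + 1) ⊓ W n) ⊔ W (n - 1)) ⊓ ((Fbar q ⊓ W n) ⊔ W (n - 1))) ⊔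
        (((F p ⊓ W n) ⊔ W (n - 1)) ⊓ ((Fbar (q + 1) ⊓ W n) ⊔ W (n - 1)))) :
    let I : ℤ → ℤ → Submodule ℂ H := fun p q =>
      (F p ⊓ W (p + q)) ⊓
        ((Fbar q ⊓ W (p + q)) ⊔
          ⨆ i : ℤ, ⨆ _ : 2 ≤ i, Fbar (q - i + 1) ⊓ W (p + q - i))
    (∀ p q : ℤ,
      I p q ⊓ W (p + q - 1) = ⊥ ∧
      I p q ⊔ W (p + q - 1) =
        ((F p ⊓ W (p + q)) ⊔ W (p + q - 1)) ⊓
          ((Fbar q ⊓ W (p + q)) ⊔ W (p + q - 1))) ∧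
    (∀ n : ℤ, W n = ⨆ p : ℤ, ⨆ q : ℤ, ⨆ _ : p + q ≤ n, I p q) ∧
    (iSupIndep fun pq : ℤ × ℤ => I pq.1 pq.2) ∧
    (∀ p : ℤ, F p = ⨆ p' : ℤ, ⨆ _ : p ≤ p', ⨆ q' : ℤ, I p' q') := by
  intro I
  obtain ⟨t, ht⟩ := hFtop
  obtain ⟨b, hb⟩ := hFbot
  have h : MixedHodge.IsMixedHodge W F Fbar :=
    { monotone_W := hW
      antitone_F := hF
      antitone_Fb := fun p p' hpp' => by
        rw [← SetLike.coe_subset_coe, hFbar, hFbar]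
        exact Set.image_mono (hF hpp')
      exists_W_eq_bot := hWbot
      exists_W_eq_top := hWtop
      exists_F_eq_top := ⟨t, ht⟩
      exists_F_eq_bot := ⟨b, hb⟩
      exists_Fb_eq_top := ⟨t, Submodule.eq_top_of_coe_eq_image_top
        (Function.Involutive.surjective σinv) (ht ▸ hFbar t)⟩
      exists_Fb_eq_bot := ⟨b, Submodule.eq_bot_of_coe_eq_image_bot (hb ▸ hFbar b)⟩
      isOpposed := hHS }
  exact ⟨fun p q => ⟨h.deligneI_inf_W p q, h.deligneI_sup_W p q⟩, h.W_eq_iSup_deligneI,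
    h.iSupIndep_deligneI, h.F_eq_iSup_deligneI⟩

/-- Deligne's canonical decomposition of a mixed Hodge structure.  Let `H` be a mixed
Hodge structure, modelled as a complex vector space with conjugation `σ` (coming from
the rational structure), an increasing weight filtration `W` defined over the rationals
(hence `σ`-stable), and a decreasing Hodge filtration `F` with conjugate `F̄`, such that
`F` and `F̄` induce a pure Hodge structure of weight `n` on each `Gr^W_n`.  Define
`I^{p,q} = (F^p ∩ W_{p+q}) ∩ (F̄^q ∩ W_{p+q} + Σ_{i≥2} F̄^{q-i+1} ∩ W_{p+q-i})`.
Then the projection `W_{p+q} → Gr^W_{p+q}` induces an isomorphism of `I^{p,q}` onto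
`H^{p,q}(Gr^W_{p+q})` (i.e. `I^{p,q} ∩ W_{p+q-1} = 0` and
`I^{p,q} + W_{p+q-1} = F^p-part ∩ F̄^q-part` of `W_{p+q}` mod `W_{p+q-1}`), and
`W_n = ⊕_{p+q≤n} I^{p,q}`, `F^p = ⊕_{p'≥p} I^{p',q'}`. -/
theorem stmt18 (H : Type*) [AddCommGroup H] [Module ℂ H]
    (σ : H → H)
    (σadd : ∀ x y, σ (x + y) = σ x + σ y)
    (σsmul : ∀ (c : ℂ) (x : H), σ (c • x) = (starRingEnd ℂ c) • σ x)
    (σinv : ∀ x, σ (σ x) = x)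
    (W : ℤ → Submodule ℂ H) (hW : Monotone W)
    (hWbot : ∃ a, W a = ⊥) (hWtop : ∃ a, W a = ⊤)
    (hWreal : ∀ n : ℤ, ∀ x ∈ W n, σ x ∈ W n)
    (F : ℤ → Submodule ℂ H) (hF : Antitone F)
    (hFtop : ∃ a, F a = ⊤) (hFbot : ∃ a, F a = ⊥)
    (Fbar : ℤ → Submodule ℂ H)
    (hFbar : ∀ p : ℤ, (Fbar p : Set H) = σ '' (F p : Set H))
    -- `F` and `F̄` induce an `n`-opposite pair on each `Gr^W_n`
    -- (expressed at the subspace level) :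
    (hHS : ∀ n p q : ℤ, p + q ≠ n →
      ((F p ⊓ W n) ⊔ W (n - 1)) ⊓ ((Fbar q ⊓ W n) ⊔ W (n - 1)) ≤
        (((F (p + 1) ⊓ W n) ⊔ W (n - 1)) ⊓ ((Fbar q ⊓ W n) ⊔ W (n - 1))) ⊔
        (((F p ⊓ W n) ⊔ W (n - 1)) ⊓ ((Fbar (q + 1) ⊓ W n) ⊔ W (n - 1)))) :
    let I : ℤ → ℤ → Submodule ℂ H := fun p q =>
      (F p ⊓ W (p + q)) ⊓
        ((Fbar q ⊓ W (p + q)) ⊔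
          ⨆ i : ℤ, ⨆ _ : 2 ≤ i, Fbar (q - i + 1) ⊓ W (p + q - i))
    (∀ p q : ℤ,
      I p q ⊓ W (p + q - 1) = ⊥ ∧
      I p q ⊔ W (p + q - 1) =
        ((F p ⊓ W (p + q)) ⊔ W (p + q - 1)) ⊓
          ((Fbar q ⊓ W (p + q)) ⊔ W (p + q - 1))) ∧
    (∀ n : ℤ, W n = ⨆ p : ℤ, ⨆ q : ℤ, ⨆ _ : p + q ≤ n, I p q) ∧
    (iSupIndep fun pq : ℤ × ℤ => I pq.1 pq.2) ∧
    (∀ p : ℤ, F p = ⨆ p' : ℤ, ⨆ _ : p ≤ p', ⨆ q' : ℤ, I p' q') :=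
  stmt18_general H σ σinv W hW hWbot hWtop F hF hFtop hFbot Fbar hFbar hHS
end

section
/- Every morphism of mixed Hodge structures is strict for both the weight and Hodge filtrations: if f : H → H' is a ℚ-linear map compatible with W and (after ⊗ℂ) with F, then f(W_n H_ℚ) = f(H_ℚ) ∩ W_n H'_ℚ for all n and f(F^p H_ℂ) = f(H_ℂ) ∩ F^p H'_ℂ for all p. -/
/-!
Deligne's splitting: the subspaces
`I^{p,q} = F^p ∩ W_{p+q} ∩ (F̄^q ∩ W_{p+q} + ∑_{j ≥ 2} F̄^{q-j+1} ∩ W_{p+q-j})`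
of `H_ℂ` are independent, `W_n = ⨁_{p+q ≤ n} I^{p,q}` and `F^p = ⨁_{r ≥ p} I^{r,s}`, and a
morphism maps `I^{p,q}` into `I'^{p,q}`. A map respecting two direct sum decompositions is strict
for every filtration spanned by summands, which gives both strictness statements over `ℂ`. Since
`ℂ` is faithfully flat over `ℚ`, strictness for `W` descends to `H_ℚ`.
-/

open TensorProduct

/-- Complex conjugation on `ℂ` as a `ℚ`-linear map. -/
noncomputable def conjQ : ℂ →ₗ[ℚ] ℂ :=
  (starRingEnd ℂ).toAddMonoidHom.toRatLinearMap

/-- The conjugation on `H_ℂ = ℂ ⊗_ℚ H_ℚ` with respect to the rational structure. -/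
noncomputable def sigmaC (Hq : Type*) [AddCommGroup Hq] [Module ℚ Hq] :
    (ℂ ⊗[ℚ] Hq) →ₗ[ℚ] (ℂ ⊗[ℚ] Hq) :=
  TensorProduct.map conjQ LinearMap.id

/-- The complexification of a rational filtration. -/
noncomputable def complexifyFil (Hq : Type*) [AddCommGroup Hq] [Module ℚ Hq]
    (W : ℤ → Submodule ℚ Hq) : ℤ → Submodule ℂ (ℂ ⊗[ℚ] Hq) :=
  fun n => Submodule.span ℂ (⇑(TensorProduct.mk ℚ ℂ Hq 1) '' (W n : Set Hq))

theorem iSupIndep_of_disjoint_biSup_lt {α ι β : Type*} [CompleteLattice α] [IsModularLattice α]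
    [IsCompactlyGenerated α] [LinearOrder β] {r : ι → β} (hr : Function.Injective r)
    {t : ι → α} (h : ∀ i, Disjoint (t i) (⨆ (j) (_ : r j < r i), t j)) : iSupIndep t := by
  classical
  refine iSupIndep_iff_supIndep.mpr fun s => ?_
  induction s using Finset.induction_on_max_value r with
  | empty => exact Finset.supIndep_empty t
  | insert i s hi hmax ih =>
    refine ih.insert ((h i).mono_right (Finset.sup_le fun j hj => ?_))
    exact le_iSup₂_of_le (f := fun j (_ : r j < r i) => t j) j
      ((hmax j hj).lt_of_ne (hr.ne (ne_of_mem_of_not_mem hj hi))) le_rfl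

namespace Submodule

section Strict

variable {R M M' : Type*} [Ring R] [AddCommGroup M] [Module R M] [AddCommGroup M'] [Module R M']

theorem range_inf_le_map_of_sup_eq_top {A B : Submodule R M} {A' B' : Submodule R M'}
    (f : M →ₗ[R] M') (hAB : A ⊔ B = ⊤) (hA : A.map f ≤ A') (hB : B.map f ≤ B')
    (hAB' : Disjoint A' B') : LinearMap.range f ⊓ A' ≤ A.map f := by
  rintro _ ⟨⟨y, rfl⟩, hy⟩
  obtain ⟨a, ha, b, hb, rfl⟩ := mem_sup.mp (hAB ▸ mem_top : y ∈ A ⊔ B)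
  have hfb : f b = 0 := by
    refine disjoint_def.mp hAB' (f b) ?_ (hB ⟨b, hb, rfl⟩)
    simpa using sub_mem hy (hA ⟨a, ha, rfl⟩)
  exact ⟨a, ha, by simp [hfb]⟩

theorem map_biSup_eq_range_inf_biSup {ι : Type*} {I : ι → Submodule R M}
    {I' : ι → Submodule R M'} (f : M →ₗ[R] M') (hI : ⨆ i, I i = ⊤) (hI' : iSupIndep I')
    (hf : ∀ i, (I i).map f ≤ I' i) (s : Set ι) :
    (⨆ i ∈ s, I i).map f = LinearMap.range f ⊓ ⨆ i ∈ s, I' i := by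
  have hmap : ∀ t : Set ι, (⨆ i ∈ t, I i).map f ≤ ⨆ i ∈ t, I' i := fun t =>
    map_le_iff_le_comap.mpr <| iSup₂_le fun i hi =>
      map_le_iff_le_comap.mp <| (hf i).trans (le_biSup I' hi)
  refine le_antisymm (le_inf LinearMap.map_le_range (hmap s)) ?_
  refine range_inf_le_map_of_sup_eq_top f ?_ (hmap s) (hmap sᶜ)
    (hI'.disjoint_biSup_biSup disjoint_compl_right)
  rw [← iSup_union, Set.union_compl_self, iSup_univ, hI]

end Strict

section BaseChange

variable {R A M M' : Type*} [CommRing R] [CommRing A] [Algebra R A]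
  [AddCommGroup M] [Module R M] [AddCommGroup M'] [Module R M']

theorem one_tmul_mem_baseChange_iff [Module.FaithfullyFlat R A] {p : Submodule R M} {x : M} :
    (1 : A) ⊗ₜ[R] x ∈ p.baseChange A ↔ x ∈ p := by
  rw [← span_singleton_le_iff_mem x p, ← baseChange_le_iff (A := A), baseChange_span,
    Set.image_singleton, mk_apply, span_singleton_le_iff_mem]

theorem map_baseChange (f : M →ₗ[R] M') (p : Submodule R M) :
    (p.baseChange A).map (f.baseChange A) = (p.map f).baseChange A := by
  rw [baseChange_eq_span, baseChange_eq_span, map_span, map_coe, map_coe, map_coe,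
    ← Set.image_comp, ← Set.image_comp]
  congr 2

theorem map_eq_range_inf_of_baseChange [Module.FaithfullyFlat R A] {p : Submodule R M}
    {p' : Submodule R M'} (f : M →ₗ[R] M') (hp : p.map f ≤ p')
    (h : (p.baseChange A).map (f.baseChange A) =
      LinearMap.range (f.baseChange A) ⊓ p'.baseChange A) :
    p.map f = LinearMap.range f ⊓ p' := by
  refine le_antisymm (le_inf LinearMap.map_le_range hp) ?_
  rintro x ⟨⟨y, rfl⟩, hx⟩
  rw [← one_tmul_mem_baseChange_iff (A := A), ← map_baseChange, h]
  exact ⟨⟨1 ⊗ₜ y, by simp⟩, tmul_mem_baseChange_of_mem 1 hx⟩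

end BaseChange

end Submodule

/-- For a mixed Hodge structure `G` is the conjugate filtration `F̄`. A subspace of `Gr^W_n` is
encoded by its preimage in `W n`; `opposed` is the form of `Gr^W_n = ⨁_{a+b=n} F^a ∩ G^b`
used throughout. -/
structure MixedHodgeFiltrations (R V : Type*) [Ring R] [AddCommGroup V] [Module R V] where
  W : ℤ → Submodule R V
  F : ℤ → Submodule R V
  G : ℤ → Submodule R V
  W_mono : Monotone W
  F_anti : Antitone F
  G_anti : Antitone G
  wMin : ℤ
  wMax : ℤ
  W_wMin : W wMin = ⊥
  W_wMax : W wMax = ⊤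
  fMin : ℤ
  fMax : ℤ
  F_fMin : F fMin = ⊤
  G_fMin : G fMin = ⊤
  F_fMax : F fMax = ⊥
  G_fMax : G fMax = ⊥
  opposed : ∀ n a b : ℤ, a + b ≠ n →
    ((F a ⊓ W n) ⊔ W (n - 1)) ⊓ ((G b ⊓ W n) ⊔ W (n - 1)) ≤
      (((F (a + 1) ⊓ W n) ⊔ W (n - 1)) ⊓ ((G b ⊓ W n) ⊔ W (n - 1))) ⊔
      (((F a ⊓ W n) ⊔ W (n - 1)) ⊓ ((G (b + 1) ⊓ W n) ⊔ W (n - 1)))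

namespace MixedHodgeFiltrations

variable {R V : Type*} [Ring R] [AddCommGroup V] [Module R V] (D : MixedHodgeFiltrations R V)

theorem W_induction {motive : ℤ → Prop} (bot : ∀ n, D.W n = ⊥ → motive n)
    (step : ∀ n, motive (n - 1) → motive n) (n : ℤ) : motive n := by
  rcases le_or_gt n D.wMin with h | h
  · exact bot n (le_bot_iff.mp (D.W_wMin ▸ D.W_mono h))
  · refine Int.leInduction (bot _ D.W_wMin) (fun k _ hk => step (k + 1) ?_) n h.le
    simpa using hk

theorem F_eq_bot {a : ℤ} (h : D.fMax ≤ a) : D.F a = ⊥ :=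
  le_bot_iff.mp (D.F_fMax ▸ D.F_anti h)

theorem G_eq_bot {b : ℤ} (h : D.fMax ≤ b) : D.G b = ⊥ :=
  le_bot_iff.mp (D.G_fMax ▸ D.G_anti h)

/-- The preimage in `W n` of `F^a Gr^W_n ∩ G^b Gr^W_n`. -/
def grInf (a b n : ℤ) : Submodule R V :=
  ((D.F a ⊓ D.W n) ⊔ D.W (n - 1)) ⊓ ((D.G b ⊓ D.W n) ⊔ D.W (n - 1))

/-- Repeated use of `opposed` pushes `F^a ∩ G^b` on `Gr^W_n` into the pieces with `r + s = n`,
the process stopping since `F` and `G` vanish far out. -/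
theorem grInf_le {n : ℤ} {X : Submodule R V} (hW : D.W (n - 1) ≤ X) (a b : ℤ)
    (hX : ∀ r s, a ≤ r → b ≤ s → r + s = n → D.grInf r s n ≤ X) : D.grInf a b n ≤ X := by
  by_cases ha : D.fMax ≤ a
  · refine inf_le_left.trans (sup_le ?_ hW)
    rw [D.F_eq_bot ha, bot_inf_eq]
    exact bot_le
  by_cases hb : D.fMax ≤ b
  · refine inf_le_right.trans (sup_le ?_ hW)
    rw [D.G_eq_bot hb, bot_inf_eq]
    exact bot_le
  by_cases hab : a + b = n
  · exact hX a b le_rfl le_rfl hab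
  refine (D.opposed n a b hab).trans (sup_le ?_ ?_)
  · exact grInf_le hW (a + 1) b fun r s har hbs => hX r s (by omega) hbs
  · exact grInf_le hW a (b + 1) fun r s har hbs => hX r s har (by omega)
termination_by (D.fMax - a).toNat + (D.fMax - b).toNat

theorem grInf_le_W_of_lt {a b n : ℤ} (h : n < a + b) : D.grInf a b n ≤ D.W (n - 1) :=
  D.grInf_le le_rfl a b fun r s har hbs hrs => by omega

theorem W_le_of_forall_grInf_le {n : ℤ} {X : Submodule R V} (hW : D.W (n - 1) ≤ X)
    (hX : ∀ r s, r + s = n → D.grInf r s n ≤ X) : D.W n ≤ X := by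
  have hWgr : D.W n ≤ D.grInf D.fMin D.fMin n := by
    simp only [grInf, D.F_fMin, D.G_fMin, top_inf_eq]
    exact le_inf le_sup_left le_sup_left
  exact hWgr.trans (D.grInf_le hW _ _ fun r s _ _ hrs => hX r s hrs)

theorem W_le_F_sup_G {p s n : ℤ} (h : p + s = n + 1) :
    D.W n ≤ (D.F p ⊓ D.W n) ⊔ (D.G s ⊓ D.W n) ⊔ D.W (n - 1) := by
  refine D.W_le_of_forall_grInf_le le_sup_right fun r t hrt => ?_
  rcases le_or_gt p r with hpr | hrp
  · exact inf_le_left.trans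
      (sup_le_sup_right (le_sup_of_le_left (inf_le_inf_right _ (D.F_anti hpr))) _)
  · exact inf_le_right.trans
      (sup_le_sup_right (le_sup_of_le_right (inf_le_inf_right _ (D.G_anti (by omega)))) _)

/-- `∑_{k ≤ m} G^{k+1-p} ∩ W_k`; with `m = p + q - 2` this is Deligne's correction term
`∑_{j ≥ 2} F̄^{q-j+1} ∩ W_{p+q-j}` in the definition of `I^{p,q}`. -/
def tail (p m : ℤ) : Submodule R V :=
  ⨆ (k : ℤ) (_ : k ≤ m), D.G (k + 1 - p) ⊓ D.W k

theorem tail_le_W (p m : ℤ) : D.tail p m ≤ D.W m :=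
  iSup₂_le fun _ hk => inf_le_right.trans (D.W_mono hk)

theorem G_inf_W_le_tail {p k m : ℤ} (h : k ≤ m) : D.G (k + 1 - p) ⊓ D.W k ≤ D.tail p m :=
  le_iSup₂_of_le (f := fun k (_ : k ≤ m) => D.G (k + 1 - p) ⊓ D.W k) k h le_rfl

theorem tail_eq_sup (p m : ℤ) :
    D.tail p m = D.G (m + 1 - p) ⊓ D.W m ⊔ D.tail p (m - 1) := by
  refine le_antisymm (iSup₂_le fun k hk => ?_)
    (sup_le (D.G_inf_W_le_tail le_rfl) (iSup₂_le fun k hk => D.G_inf_W_le_tail (by omega)))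
  rcases hk.eq_or_lt with rfl | hk
  · exact le_sup_left
  · exact le_sup_of_le_right (D.G_inf_W_le_tail (by omega))

theorem tail_le_G_sup_tail (p q : ℤ) :
    D.tail p (p + q - 1) ≤ D.G q ⊓ D.W (p + q) ⊔ D.tail p (p + q - 2) := by
  refine iSup₂_le fun k hk => ?_
  rcases hk.eq_or_lt with rfl | hk
  · exact le_sup_of_le_left (inf_le_inf (D.G_anti (by omega)) (D.W_mono (by omega)))
  · exact le_sup_of_le_right (D.G_inf_W_le_tail (by omega))

theorem F_inf_tail_eq_bot (p : ℤ) : ∀ m, D.F p ⊓ D.tail p m = ⊥ := by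
  refine D.W_induction (fun m hm => ?_) fun m ih => eq_bot_iff.mpr (le_trans ?_ ih.le)
  · exact eq_bot_iff.mpr (inf_le_right.trans ((D.tail_le_W p m).trans hm.le))
  have hW : D.F p ⊓ D.tail p m ≤ D.W (m - 1) := by
    refine le_trans ?_ (D.grInf_le_W_of_lt (a := p) (b := m + 1 - p) (by omega))
    refine le_inf (le_sup_of_le_left (inf_le_inf_left _ (D.tail_le_W p m))) ?_
    rw [D.tail_eq_sup]
    exact inf_le_right.trans (sup_le_sup_left (D.tail_le_W p (m - 1)) _)
  have hT : D.tail p m ⊓ D.W (m - 1) ≤ D.tail p (m - 1) := by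
    rw [D.tail_eq_sup, sup_comm, sup_inf_assoc_of_le _ (D.tail_le_W p (m - 1))]
    refine sup_le le_rfl (le_trans ?_ (D.G_inf_W_le_tail (k := m - 1) le_rfl))
    exact inf_le_inf_right _ (inf_le_left.trans (D.G_anti (by omega)))
  exact le_inf inf_le_left ((le_inf inf_le_right hW).trans hT)

def I (p q : ℤ) : Submodule R V :=
  D.F p ⊓ D.W (p + q) ⊓ (D.G q ⊓ D.W (p + q) ⊔ D.tail p (p + q - 2))

theorem I_le_F (p q : ℤ) : D.I p q ≤ D.F p := inf_le_left.trans inf_le_left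

theorem I_le_W (p q : ℤ) : D.I p q ≤ D.W (p + q) := inf_le_left.trans inf_le_right

theorem I_le_G_sup_W (p q : ℤ) : D.I p q ≤ D.G q ⊓ D.W (p + q) ⊔ D.W (p + q - 1) :=
  inf_le_right.trans (sup_le_sup_left ((D.tail_le_W p _).trans (D.W_mono (by omega))) _)

theorem I_inf_W_eq_bot (p q : ℤ) : D.I p q ⊓ D.W (p + q - 1) = ⊥ := by
  refine eq_bot_iff.mpr (le_trans ?_ (D.F_inf_tail_eq_bot p (p + q - 1)).le)
  refine le_inf (inf_le_left.trans (D.I_le_F p q)) ?_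
  refine (inf_le_inf_right _ inf_le_right).trans ?_
  rw [sup_comm, sup_inf_assoc_of_le _ ((D.tail_le_W p _).trans (D.W_mono (by omega)))]
  refine sup_le ((D.tail_eq_sup p _).ge.trans' ?_) ?_
  · rw [show p + q - 1 - 1 = p + q - 2 by omega]
    exact le_sup_right
  · refine le_trans ?_ (D.G_inf_W_le_tail (k := p + q - 1) le_rfl)
    exact inf_le_inf_right _ (inf_le_left.trans (D.G_anti (by omega)))

/-- Deligne's lifting step: an element of `F^p ∩ W_{p+q}` is corrected weight by weight, using
`W_le_F_sup_G`, until it lies in `I^{p,q}`. -/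
theorem F_inf_W_inf_le_I_sup (p q : ℤ) : ∀ m, m ≤ p + q - 1 →
    D.F p ⊓ D.W (p + q) ⊓ (D.G q ⊓ D.W (p + q) ⊔ D.tail p (p + q - 2) ⊔ D.W m) ≤
      D.I p q ⊔ D.F p ⊓ D.W (p + q - 1) := by
  refine D.W_induction (fun m hm _ => ?_) fun m ih hm => ?_
  · rw [hm, sup_bot_eq]
    exact le_sup_left
  set P := D.F p ⊓ D.W (p + q)
  set A := D.G q ⊓ D.W (p + q) ⊔ D.tail p (p + q - 2)
  have hGA : D.G (m + 1 - p) ⊓ D.W m ≤ A :=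
    (D.G_inf_W_le_tail hm).trans (D.tail_le_G_sup_tail p q)
  have hWm : D.W m ≤ D.F p ⊓ D.W m ⊔ (A ⊔ D.W (m - 1)) := by
    refine (D.W_le_F_sup_G (p := p) (s := m + 1 - p) (by omega)).trans ?_
    rw [sup_assoc]
    exact sup_le_sup_left (sup_le_sup_right hGA _) _
  have hFP : D.F p ⊓ D.W m ≤ P := inf_le_inf_left _ (D.W_mono (by omega))
  calc P ⊓ (A ⊔ D.W m)
      ≤ P ⊓ (D.F p ⊓ D.W m ⊔ (A ⊔ D.W (m - 1))) :=
        inf_le_inf_left _ (sup_le (le_sup_of_le_right le_sup_left) hWm)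
    _ = D.F p ⊓ D.W m ⊔ P ⊓ (A ⊔ D.W (m - 1)) := by
        rw [inf_comm, sup_inf_assoc_of_le _ hFP, inf_comm (A ⊔ D.W (m - 1))]
    _ ≤ D.I p q ⊔ D.F p ⊓ D.W (p + q - 1) :=
        sup_le (le_sup_of_le_right (inf_le_inf_left _ (D.W_mono (by omega)))) (ih (by omega))

theorem grInf_le_I_sup_W (p q : ℤ) : D.grInf p q (p + q) ≤ D.I p q ⊔ D.W (p + q - 1) := by
  set A := D.G q ⊓ D.W (p + q) ⊔ D.tail p (p + q - 2)
  calc D.grInf p q (p + q)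
      ≤ (D.W (p + q - 1) ⊔ D.F p ⊓ D.W (p + q)) ⊓ (A ⊔ D.W (p + q - 1)) :=
        inf_le_inf (le_of_eq (sup_comm _ _)) (sup_le_sup_right le_sup_left _)
    _ = D.W (p + q - 1) ⊔ D.F p ⊓ D.W (p + q) ⊓ (A ⊔ D.W (p + q - 1)) :=
        sup_inf_assoc_of_le _ le_sup_right
    _ ≤ D.I p q ⊔ D.W (p + q - 1) := by
        refine sup_le le_sup_right ((D.F_inf_W_inf_le_I_sup p q _ le_rfl).trans ?_)
        exact sup_le_sup_left inf_le_right _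

theorem W_eq_iSup_I (n : ℤ) : D.W n = ⨆ i ∈ {i : ℤ × ℤ | i.1 + i.2 ≤ n}, D.I i.1 i.2 := by
  refine le_antisymm ?_ (iSup₂_le fun i hi => (D.I_le_W i.1 i.2).trans (D.W_mono hi))
  induction n using D.W_induction with
  | bot n hn => rw [hn]; exact bot_le
  | step n ih =>
    have hmono : ∀ m ≤ n, ⨆ i ∈ {i : ℤ × ℤ | i.1 + i.2 ≤ m}, D.I i.1 i.2 ≤
        ⨆ i ∈ {i : ℤ × ℤ | i.1 + i.2 ≤ n}, D.I i.1 i.2 := fun m hm =>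
      biSup_mono fun i hi => le_trans hi hm
    refine D.W_le_of_forall_grInf_le (ih.trans (hmono (n - 1) (by omega))) fun r s hrs => ?_
    subst hrs
    refine (D.grInf_le_I_sup_W r s).trans (sup_le ?_ (ih.trans (hmono (r + s - 1) (by omega))))
    exact le_iSup₂_of_le (f := fun i (_ : i ∈ {i : ℤ × ℤ | i.1 + i.2 ≤ r + s}) => D.I i.1 i.2)
      (r, s) (le_refl (r + s)) le_rfl

theorem F_eq_iSup_I (p : ℤ) : D.F p = ⨆ i ∈ {i : ℤ × ℤ | p ≤ i.1}, D.I i.1 i.2 := by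
  set X := ⨆ i ∈ {i : ℤ × ℤ | p ≤ i.1}, D.I i.1 i.2
  have hXF : X ≤ D.F p := iSup₂_le fun i hi => (D.I_le_F i.1 i.2).trans (D.F_anti hi)
  refine le_antisymm ?_ hXF
  suffices h : ∀ n, D.F p ⊓ D.W n ≤ X by
    simpa [D.W_wMax] using h D.wMax
  refine D.W_induction (fun n hn => by rw [hn, inf_bot_eq]; exact bot_le) fun n ih => ?_
  have hgr : D.grInf p D.fMin n ≤ X ⊔ D.W (n - 1) := by
    refine D.grInf_le le_sup_right p _ fun r s hpr _ hrs => ?_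
    subst hrs
    refine (D.grInf_le_I_sup_W r s).trans (sup_le_sup_right ?_ _)
    exact le_iSup₂_of_le (f := fun i (_ : i ∈ {i : ℤ × ℤ | p ≤ i.1}) => D.I i.1 i.2)
      (r, s) hpr le_rfl
  have hFW : D.F p ⊓ D.W n ≤ D.grInf p D.fMin n := by
    refine le_inf le_sup_left (le_sup_of_le_left ?_)
    rw [D.G_fMin, top_inf_eq]
    exact inf_le_right
  calc D.F p ⊓ D.W n ≤ (X ⊔ D.W (n - 1)) ⊓ D.F p := le_inf (hFW.trans hgr) inf_le_left
    _ = X ⊔ D.W (n - 1) ⊓ D.F p := sup_inf_assoc_of_le _ hXF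
    _ ≤ X := sup_le le_rfl (by rw [inf_comm]; exact ih)

theorem iSup_I_eq_top : ⨆ i : ℤ × ℤ, D.I i.1 i.2 = ⊤ := by
  refine top_le_iff.mp ?_
  rw [← D.W_wMax, D.W_eq_iSup_I]
  exact iSup_mono fun i => iSup_le fun _ => le_rfl

/-- Ordering `I^{p,q}` by weight `p + q` and then by `p`, all earlier pieces lie in
`G^{q+1} ∩ W_{p+q} + W_{p+q-1}`, which meets `I^{p,q}` trivially by opposedness. -/
theorem iSupIndep_I : iSupIndep fun i : ℤ × ℤ => D.I i.1 i.2 := by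
  have hr : Function.Injective fun i : ℤ × ℤ => toLex (i.1 + i.2, i.1) := fun i j h => by
    simp only [toLex_inj, Prod.mk.injEq] at h
    ext <;> omega
  refine iSupIndep_of_disjoint_biSup_lt hr fun ⟨p, q⟩ => ?_
  have hlt : (⨆ (j : ℤ × ℤ) (_ : toLex (j.1 + j.2, j.1) < toLex (p + q, p)), D.I j.1 j.2) ≤
      D.G (q + 1) ⊓ D.W (p + q) ⊔ D.W (p + q - 1) := by
    refine iSup₂_le fun ⟨r, s⟩ h => ?_
    rcases Prod.Lex.toLex_lt_toLex.mp h with h | ⟨h, h'⟩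
    · exact le_sup_of_le_right ((D.I_le_W r s).trans (D.W_mono (by simp only at h; omega)))
    · simp only at h h'
      refine (D.I_le_G_sup_W r s).trans (sup_le_sup ?_ (D.W_mono (by omega)))
      exact inf_le_inf (D.G_anti (by omega)) (D.W_mono (by omega))
  refine disjoint_iff.mpr (eq_bot_iff.mpr ?_)
  rw [← D.I_inf_W_eq_bot p q]
  refine le_inf inf_le_left (le_trans ?_ (D.grInf_le_W_of_lt (a := p) (b := q + 1) (by omega)))
  refine le_inf (inf_le_left.trans ?_) (inf_le_right.trans hlt)
  exact le_sup_of_le_left (le_inf (D.I_le_F p q) (D.I_le_W p q))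

end MixedHodgeFiltrations

namespace MixedHodgeFiltrations

variable {R V V' : Type*} [Ring R] [AddCommGroup V] [Module R V] [AddCommGroup V'] [Module R V']

structure IsMorphism (D : MixedHodgeFiltrations R V) (D' : MixedHodgeFiltrations R V')
    (φ : V →ₗ[R] V') : Prop where
  map_W_le : ∀ n, (D.W n).map φ ≤ D'.W n
  map_F_le : ∀ p, (D.F p).map φ ≤ D'.F p
  map_G_le : ∀ q, (D.G q).map φ ≤ D'.G q

namespace IsMorphism

variable {D : MixedHodgeFiltrations R V} {D' : MixedHodgeFiltrations R V'} {φ : V →ₗ[R] V'}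

theorem map_tail_le (hφ : IsMorphism D D' φ) (p m : ℤ) : (D.tail p m).map φ ≤ D'.tail p m := by
  simp only [tail, Submodule.map_iSup]
  exact iSup₂_mono fun k _ =>
    (Submodule.map_inf_le φ).trans (inf_le_inf (hφ.map_G_le _) (hφ.map_W_le _))

theorem map_I_le (hφ : IsMorphism D D' φ) (p q : ℤ) : (D.I p q).map φ ≤ D'.I p q := by
  refine (Submodule.map_inf_le φ).trans (inf_le_inf ?_ ?_)
  · exact (Submodule.map_inf_le φ).trans (inf_le_inf (hφ.map_F_le p) (hφ.map_W_le _))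
  · rw [Submodule.map_sup]
    refine sup_le_sup ?_ (hφ.map_tail_le p _)
    exact (Submodule.map_inf_le φ).trans (inf_le_inf (hφ.map_G_le q) (hφ.map_W_le _))

theorem map_W_eq (hφ : IsMorphism D D' φ) (n : ℤ) :
    (D.W n).map φ = LinearMap.range φ ⊓ D'.W n := by
  rw [D.W_eq_iSup_I, D'.W_eq_iSup_I]
  exact Submodule.map_biSup_eq_range_inf_biSup φ D.iSup_I_eq_top D'.iSupIndep_I
    (fun i => hφ.map_I_le i.1 i.2) _

theorem map_F_eq (hφ : IsMorphism D D' φ) (p : ℤ) :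
    (D.F p).map φ = LinearMap.range φ ⊓ D'.F p := by
  rw [D.F_eq_iSup_I, D'.F_eq_iSup_I]
  exact Submodule.map_biSup_eq_range_inf_biSup φ D.iSup_I_eq_top D'.iSupIndep_I
    (fun i => hφ.map_I_le i.1 i.2) _

end IsMorphism

end MixedHodgeFiltrations

section Complexification

variable {Hq Hq' : Type*} [AddCommGroup Hq] [Module ℚ Hq] [AddCommGroup Hq'] [Module ℚ Hq']

theorem complexifyFil_eq_baseChange (W : ℤ → Submodule ℚ Hq) (n : ℤ) :
    complexifyFil Hq W n = (W n).baseChange ℂ := by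
  rw [Submodule.baseChange_eq_span, Submodule.map_coe]
  rfl

theorem sigmaC_tmul (c : ℂ) (x : Hq) : sigmaC Hq (c ⊗ₜ[ℚ] x) = (starRingEnd ℂ c) ⊗ₜ[ℚ] x := rfl

theorem sigmaC_involutive : Function.Involutive (sigmaC Hq) := fun x => by
  induction x using TensorProduct.induction_on with
  | zero => simp
  | tmul c m => rw [sigmaC_tmul, sigmaC_tmul, Complex.conj_conj]
  | add a b ha hb => rw [map_add, map_add, ha, hb]

theorem baseChange_sigmaC (f : Hq →ₗ[ℚ] Hq') (x : ℂ ⊗[ℚ] Hq) :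
    f.baseChange ℂ (sigmaC Hq x) = sigmaC Hq' (f.baseChange ℂ x) := by
  induction x using TensorProduct.induction_on with
  | zero => simp
  | tmul c m => rfl
  | add a b ha hb => simp only [map_add, ha, hb]

variable {F Fbar : ℤ → Submodule ℂ (ℂ ⊗[ℚ] Hq)}

theorem antitone_of_coe_eq_image_sigmaC (hFbar : ∀ p, (Fbar p : Set _) = sigmaC Hq '' F p)
    (hF : Antitone F) : Antitone Fbar := fun a b hab => by
  rw [← SetLike.coe_subset_coe, hFbar, hFbar]
  exact Set.image_mono (hF hab)

theorem eq_top_of_coe_eq_image_sigmaC (hFbar : ∀ p, (Fbar p : Set _) = sigmaC Hq '' F p)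
    {p : ℤ} (hp : F p = ⊤) : Fbar p = ⊤ := by
  refine SetLike.coe_injective ?_
  rw [hFbar, hp, Submodule.top_coe, Set.image_univ_of_surjective sigmaC_involutive.surjective]

theorem eq_bot_of_coe_eq_image_sigmaC (hFbar : ∀ p, (Fbar p : Set _) = sigmaC Hq '' F p)
    {p : ℤ} (hp : F p = ⊥) : Fbar p = ⊥ := by
  refine SetLike.coe_injective ?_
  rw [hFbar, hp, Submodule.bot_coe, Set.image_singleton, map_zero]

noncomputable def MixedHodgeFiltrations.ofRat (W : ℤ → Submodule ℚ Hq) (hW : Monotone W)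
    (hWbot : ∃ a, W a = ⊥) (hWtop : ∃ a, W a = ⊤) (hF : Antitone F)
    (hFtop : ∃ a, F a = ⊤) (hFbot : ∃ a, F a = ⊥)
    (hFbar : ∀ p, (Fbar p : Set _) = sigmaC Hq '' F p)
    (hHS : ∀ n p q : ℤ, p + q ≠ n →
      ((F p ⊓ complexifyFil Hq W n) ⊔ complexifyFil Hq W (n - 1)) ⊓
          ((Fbar q ⊓ complexifyFil Hq W n) ⊔ complexifyFil Hq W (n - 1)) ≤
        (((F (p + 1) ⊓ complexifyFil Hq W n) ⊔ complexifyFil Hq W (n - 1)) ⊓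
            ((Fbar q ⊓ complexifyFil Hq W n) ⊔ complexifyFil Hq W (n - 1))) ⊔
        (((F p ⊓ complexifyFil Hq W n) ⊔ complexifyFil Hq W (n - 1)) ⊓
            ((Fbar (q + 1) ⊓ complexifyFil Hq W n) ⊔ complexifyFil Hq W (n - 1)))) :
    MixedHodgeFiltrations ℂ (ℂ ⊗[ℚ] Hq) where
  W := complexifyFil Hq W
  F := F
  G := Fbar
  W_mono a b hab := by
    simp only [complexifyFil_eq_baseChange]
    exact Submodule.baseChange_mono ℂ (hW hab)
  F_anti := hF
  G_anti := antitone_of_coe_eq_image_sigmaC hFbar hF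
  wMin := hWbot.choose
  wMax := hWtop.choose
  W_wMin := by rw [complexifyFil_eq_baseChange, hWbot.choose_spec, Submodule.baseChange_bot]
  W_wMax := by rw [complexifyFil_eq_baseChange, hWtop.choose_spec, Submodule.baseChange_top]
  fMin := hFtop.choose
  fMax := hFbot.choose
  F_fMin := hFtop.choose_spec
  G_fMin := eq_top_of_coe_eq_image_sigmaC hFbar hFtop.choose_spec
  F_fMax := hFbot.choose_spec
  G_fMax := eq_bot_of_coe_eq_image_sigmaC hFbar hFbot.choose_spec
  opposed := hHS

theorem map_baseChange_complexifyFil_le {W : ℤ → Submodule ℚ Hq} {W' : ℤ → Submodule ℚ Hq'}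
    {f : Hq →ₗ[ℚ] Hq'} (hfW : ∀ n, (W n).map f ≤ W' n) (n : ℤ) :
    (complexifyFil Hq W n).map (f.baseChange ℂ) ≤ complexifyFil Hq' W' n := by
  rw [complexifyFil_eq_baseChange, complexifyFil_eq_baseChange, Submodule.map_baseChange]
  exact Submodule.baseChange_mono ℂ (hfW n)

theorem map_baseChange_le_of_coe_eq_image_sigmaC {F' F'bar : ℤ → Submodule ℂ (ℂ ⊗[ℚ] Hq')}
    {f : Hq →ₗ[ℚ] Hq'} (hFbar : ∀ p, (Fbar p : Set _) = sigmaC Hq '' F p)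
    (hF'bar : ∀ p, (F'bar p : Set _) = sigmaC Hq' '' F' p)
    (hfF : ∀ p, (F p).map (f.baseChange ℂ) ≤ F' p) (q : ℤ) :
    (Fbar q).map (f.baseChange ℂ) ≤ F'bar q := by
  rintro _ ⟨v, hv, rfl⟩
  rw [hFbar] at hv
  obtain ⟨w, hw, rfl⟩ := hv
  rw [← SetLike.mem_coe, hF'bar, baseChange_sigmaC]
  exact ⟨_, hfF q ⟨w, hw, rfl⟩, rfl⟩

end Complexification

theorem stmt19_general (Hq Hq' : Type*)
    [AddCommGroup Hq] [Module ℚ Hq]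
    [AddCommGroup Hq'] [Module ℚ Hq']
    (W : ℤ → Submodule ℚ Hq) (W' : ℤ → Submodule ℚ Hq')
    (hW : Monotone W) (hW' : Monotone W')
    (hWbot : ∃ a, W a = ⊥) (hWtop : ∃ a, W a = ⊤)
    (hW'bot : ∃ a, W' a = ⊥) (hW'top : ∃ a, W' a = ⊤)
    (F : ℤ → Submodule ℂ (ℂ ⊗[ℚ] Hq)) (F' : ℤ → Submodule ℂ (ℂ ⊗[ℚ] Hq'))
    (hF : Antitone F) (hF' : Antitone F')
    (hFtop : ∃ a, F a = ⊤) (hFbot : ∃ a, F a = ⊥)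
    (hF'top : ∃ a, F' a = ⊤) (hF'bot : ∃ a, F' a = ⊥)
    -- the conjugate Hodge filtrations :
    (Fbar : ℤ → Submodule ℂ (ℂ ⊗[ℚ] Hq)) (F'bar : ℤ → Submodule ℂ (ℂ ⊗[ℚ] Hq'))
    (hFbar : ∀ p : ℤ, (Fbar p : Set (ℂ ⊗[ℚ] Hq)) = ⇑(sigmaC Hq) '' (F p : Set (ℂ ⊗[ℚ] Hq)))
    (hF'bar : ∀ p : ℤ, (F'bar p : Set (ℂ ⊗[ℚ] Hq')) =
      ⇑(sigmaC Hq') '' (F' p : Set (ℂ ⊗[ℚ] Hq')))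
    -- `F` and `F̄` induce a pure Hodge structure of weight `n` on each `Gr^W_n`,
    -- expressed at the subspace level via the complexified weight filtration :
    (hHS : ∀ n p q : ℤ, p + q ≠ n →
      ((F p ⊓ complexifyFil Hq W n) ⊔ complexifyFil Hq W (n - 1)) ⊓
          ((Fbar q ⊓ complexifyFil Hq W n) ⊔ complexifyFil Hq W (n - 1)) ≤
        (((F (p + 1) ⊓ complexifyFil Hq W n) ⊔ complexifyFil Hq W (n - 1)) ⊓
            ((Fbar q ⊓ complexifyFil Hq W n) ⊔ complexifyFil Hq W (n - 1))) ⊔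
        (((F p ⊓ complexifyFil Hq W n) ⊔ complexifyFil Hq W (n - 1)) ⊓
            ((Fbar (q + 1) ⊓ complexifyFil Hq W n) ⊔ complexifyFil Hq W (n - 1))))
    (hHS' : ∀ n p q : ℤ, p + q ≠ n →
      ((F' p ⊓ complexifyFil Hq' W' n) ⊔ complexifyFil Hq' W' (n - 1)) ⊓
          ((F'bar q ⊓ complexifyFil Hq' W' n) ⊔ complexifyFil Hq' W' (n - 1)) ≤
        (((F' (p + 1) ⊓ complexifyFil Hq' W' n) ⊔ complexifyFil Hq' W' (n - 1)) ⊓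
            ((F'bar q ⊓ complexifyFil Hq' W' n) ⊔ complexifyFil Hq' W' (n - 1))) ⊔
        (((F' p ⊓ complexifyFil Hq' W' n) ⊔ complexifyFil Hq' W' (n - 1)) ⊓
            ((F'bar (q + 1) ⊓ complexifyFil Hq' W' n) ⊔ complexifyFil Hq' W' (n - 1))))
    -- a morphism of mixed Hodge structures :
    (f : Hq →ₗ[ℚ] Hq')
    (hfW : ∀ n : ℤ, Submodule.map f (W n) ≤ W' n)
    (hfF : ∀ p : ℤ, Submodule.map (f.baseChange ℂ) (F p) ≤ F' p) :
    (∀ n : ℤ, Submodule.map f (W n) = LinearMap.range f ⊓ W' n) ∧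
    (∀ p : ℤ, Submodule.map (f.baseChange ℂ) (F p) =
      LinearMap.range (f.baseChange ℂ) ⊓ F' p) := by
  let D := MixedHodgeFiltrations.ofRat W hW hWbot hWtop hF hFtop hFbot hFbar hHS
  let D' := MixedHodgeFiltrations.ofRat W' hW' hW'bot hW'top hF' hF'top hF'bot hF'bar hHS'
  have hφ : D.IsMorphism D' (f.baseChange ℂ) :=
    ⟨map_baseChange_complexifyFil_le hfW, hfF,
      map_baseChange_le_of_coe_eq_image_sigmaC hFbar hF'bar hfF⟩
  refine ⟨fun n => Submodule.map_eq_range_inf_of_baseChange (A := ℂ) f (hfW n) ?_, hφ.map_F_eq⟩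
  rw [← complexifyFil_eq_baseChange, ← complexifyFil_eq_baseChange]
  exact hφ.map_W_eq n

/-- Every morphism of mixed Hodge structures is strict for both the weight and the
Hodge filtrations: if `f : H_ℚ → H'_ℚ` is a `ℚ`-linear map compatible with `W` and
(after `⊗ℂ`) with `F`, then `f(W_n H_ℚ) = f(H_ℚ) ∩ W_n H'_ℚ` for all `n`, and
`f(F^p H_ℂ) = f(H_ℂ) ∩ F^p H'_ℂ` for all `p`. -/
theorem stmt19 (Hq Hq' : Type*)
    [AddCommGroup Hq] [Module ℚ Hq] [FiniteDimensional ℚ Hq]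
    [AddCommGroup Hq'] [Module ℚ Hq'] [FiniteDimensional ℚ Hq']
    (W : ℤ → Submodule ℚ Hq) (W' : ℤ → Submodule ℚ Hq')
    (hW : Monotone W) (hW' : Monotone W')
    (hWbot : ∃ a, W a = ⊥) (hWtop : ∃ a, W a = ⊤)
    (hW'bot : ∃ a, W' a = ⊥) (hW'top : ∃ a, W' a = ⊤)
    (F : ℤ → Submodule ℂ (ℂ ⊗[ℚ] Hq)) (F' : ℤ → Submodule ℂ (ℂ ⊗[ℚ] Hq'))
    (hF : Antitone F) (hF' : Antitone F')
    (hFtop : ∃ a, F a = ⊤) (hFbot : ∃ a, F a = ⊥)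
    (hF'top : ∃ a, F' a = ⊤) (hF'bot : ∃ a, F' a = ⊥)
    -- the conjugate Hodge filtrations :
    (Fbar : ℤ → Submodule ℂ (ℂ ⊗[ℚ] Hq)) (F'bar : ℤ → Submodule ℂ (ℂ ⊗[ℚ] Hq'))
    (hFbar : ∀ p : ℤ, (Fbar p : Set (ℂ ⊗[ℚ] Hq)) = ⇑(sigmaC Hq) '' (F p : Set (ℂ ⊗[ℚ] Hq)))
    (hF'bar : ∀ p : ℤ, (F'bar p : Set (ℂ ⊗[ℚ] Hq')) =
      ⇑(sigmaC Hq') '' (F' p : Set (ℂ ⊗[ℚ] Hq')))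
    -- `F` and `F̄` induce a pure Hodge structure of weight `n` on each `Gr^W_n`,
    -- expressed at the subspace level via the complexified weight filtration :
    (hHS : ∀ n p q : ℤ, p + q ≠ n →
      ((F p ⊓ complexifyFil Hq W n) ⊔ complexifyFil Hq W (n - 1)) ⊓
          ((Fbar q ⊓ complexifyFil Hq W n) ⊔ complexifyFil Hq W (n - 1)) ≤
        (((F (p + 1) ⊓ complexifyFil Hq W n) ⊔ complexifyFil Hq W (n - 1)) ⊓
            ((Fbar q ⊓ complexifyFil Hq W n) ⊔ complexifyFil Hq W (n - 1))) ⊔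
        (((F p ⊓ complexifyFil Hq W n) ⊔ complexifyFil Hq W (n - 1)) ⊓
            ((Fbar (q + 1) ⊓ complexifyFil Hq W n) ⊔ complexifyFil Hq W (n - 1))))
    (hHS' : ∀ n p q : ℤ, p + q ≠ n →
      ((F' p ⊓ complexifyFil Hq' W' n) ⊔ complexifyFil Hq' W' (n - 1)) ⊓
          ((F'bar q ⊓ complexifyFil Hq' W' n) ⊔ complexifyFil Hq' W' (n - 1)) ≤
        (((F' (p + 1) ⊓ complexifyFil Hq' W' n) ⊔ complexifyFil Hq' W' (n - 1)) ⊓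
            ((F'bar q ⊓ complexifyFil Hq' W' n) ⊔ complexifyFil Hq' W' (n - 1))) ⊔
        (((F' p ⊓ complexifyFil Hq' W' n) ⊔ complexifyFil Hq' W' (n - 1)) ⊓
            ((F'bar (q + 1) ⊓ complexifyFil Hq' W' n) ⊔ complexifyFil Hq' W' (n - 1))))
    -- a morphism of mixed Hodge structures :
    (f : Hq →ₗ[ℚ] Hq')
    (hfW : ∀ n : ℤ, Submodule.map f (W n) ≤ W' n)
    (hfF : ∀ p : ℤ, Submodule.map (f.baseChange ℂ) (F p) ≤ F' p) :
    (∀ n : ℤ, Submodule.map f (W n) = LinearMap.range f ⊓ W' n) ∧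
    (∀ p : ℤ, Submodule.map (f.baseChange ℂ) (F p) =
      LinearMap.range (f.baseChange ℂ) ⊓ F' p) :=
  stmt19_general Hq Hq' W W' hW hW' hWbot hWtop hW'bot hW'top F F' hF hF' hFtop hFbot hF'top hF'bot
    Fbar F'bar hFbar hF'bar hHS hHS' f hfW hfF
end
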